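/- arXiv:1605.08940 — 7 statements merged into one kernel-verified Lean document; each statement's English description precedes it below -/
import Mathlib

section
/- Let A be a compact abelian topological group which is a compact space, acting continuously and freely on a compact space B; let S = B/A be the orbit space with the quotient topology and π : B → S the orbit map. Let μ_S be a regular Borel probability measure on S. Then there exists a unique regular Borel probability measure μ on B that is invariant under the action of A and satisfies π_*μ = μ_S (i.e. μ(π⁻¹(E)) = μ_S(E) for every Borel E ⊆ S). -/
open MeasureTheory
open scoped NNReal ENNReal

open Set Function Filter Topology in
/-- Pick the first element `x` of the list such that `s ∈ C x`. -/
noncomputable def listPick {S B : Type*} (C : B → Set S) (d : B) : List B → S → B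
  | [] => fun _ => d
  | x :: l => fun s =>
      haveI := Classical.dec (s ∈ C x)
      if s ∈ C x then x else listPick C d l s

open Set Function in
lemma listPick_measurable {S B : Type*} [MeasurableSpace S] [MeasurableSpace B]
    {C : B → Set S} (hC : ∀ x, MeasurableSet (C x)) (d : B) :
    ∀ L : List B, Measurable (listPick C d L)
  | [] => measurable_const
  | x :: l => by
      simp only [listPick]
      exact Measurable.ite (hC x) measurable_const (listPick_measurable hC d l)

open Set Function in
lemma listPick_spec {S B : Type*} {C : B → Set S} {d : B} :
    ∀ {L : List B} {s : S}, (∃ x ∈ L, s ∈ C x) →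
      listPick C d L s ∈ L ∧ s ∈ C (listPick C d L s) := by
  intro L
  induction L with
  | nil => rintro s ⟨x, hx, -⟩; exact absurd hx List.not_mem_nil
  | cons x l ih =>
      intro s hs
      simp only [listPick]
      by_cases h : s ∈ C x
      · simp [h]
      · rw [if_neg h]
        have : ∃ y ∈ l, s ∈ C y := by
          obtain ⟨y, hy, hsy⟩ := hs
          rcases List.mem_cons.1 hy with rfl | hy'
          · exact absurd hsy h
          · exact ⟨y, hy', hsy⟩
        obtain ⟨h1, h2⟩ := ih this
        exact ⟨List.mem_cons_of_mem _ h1, h2⟩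

open Set Function in
lemma listPick_range {S B : Type*} {C : B → Set S} {d : B} (L : List B) (s : S) :
    listPick C d L s ∈ insert d {x | x ∈ L} := by
  induction L with
  | nil => simp [listPick]
  | cons x l ih =>
      simp only [listPick]
      by_cases h : s ∈ C x
      · simp [h]
      · rw [if_neg h]
        rcases ih with h1 | h1
        · exact Or.inl h1
        · exact Or.inr (List.mem_cons_of_mem _ h1)

open Set Function Filter Topology in
/-- A continuous surjection from a compact metric space onto a T2 space admits a Borel
measurable section. -/
lemma exists_measurable_section {B S : Type*} [MetricSpace B] [CompactSpace B]
    [MeasurableSpace B] [BorelSpace B]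
    [TopologicalSpace S] [T2Space S] [MeasurableSpace S] [OpensMeasurableSpace S]
    {π : B → S} (hc : Continuous π) (hs : Surjective π) :
    ∃ σ : S → B, Measurable σ ∧ ∀ s, π (σ s) = s := by
  classical
  rcases isEmpty_or_nonempty B with hB | hB
  · haveI : IsEmpty S := ⟨fun s => (hs s).elim fun b _ => isEmptyElim b⟩
    exact ⟨fun s => isEmptyElim s, fun u _ => by
      convert MeasurableSet.empty using 1
      exact eq_empty_of_isEmpty _, fun s => isEmptyElim s⟩
  inhabit B
  -- the refinement step
  have key : ∀ r : ℝ, 0 < r → ∀ ρ : ℝ, ∀ g : S → B, Measurable g → (range g).Finite →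
      (∀ s, ∃ b, π b = s ∧ dist b (g s) ≤ ρ) →
      ∃ g' : S → B, Measurable g' ∧ (range g').Finite ∧
        (∀ s, ∃ b, π b = s ∧ dist b (g' s) ≤ r) ∧ ∀ s, dist (g' s) (g s) ≤ r + ρ := by
    intro r hr ρ g hgm hgf hgapp
    obtain ⟨t, -, htf, htc⟩ :=
      finite_cover_balls_of_compact (isCompact_univ : IsCompact (univ : Set B)) hr
    set L : List B := htf.toFinset.toList with hL
    have hmemL : ∀ x, x ∈ L ↔ x ∈ t := by
      intro x; rw [hL, Finset.mem_toList, Set.Finite.mem_toFinset]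
    set C : B → B → Set S := fun y x => π '' (Metric.closedBall x r ∩ Metric.closedBall y ρ)
      with hC
    have hCmeas : ∀ y x, MeasurableSet (C y x) := by
      intro y x
      have hcomp : IsCompact (Metric.closedBall x r ∩ Metric.closedBall y ρ) :=
        (Metric.isClosed_closedBall.inter Metric.isClosed_closedBall).isCompact
      exact ((hcomp.image hc).isClosed).measurableSet
    set G : B → S → B := fun y => listPick (C y) default L with hG
    set g' : S → B := fun s => G (g s) s with hg'
    have hcond : ∀ s, ∃ x ∈ L, s ∈ C (g s) x := by
      intro s
      obtain ⟨b, hb, hbd⟩ := hgapp s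
      have : b ∈ ⋃ x ∈ t, Metric.ball x r := htc (mem_univ b)
      simp only [mem_iUnion, exists_prop] at this
      obtain ⟨x, hxt, hbx⟩ := this
      exact ⟨x, (hmemL x).2 hxt, ⟨b, ⟨Metric.ball_subset_closedBall hbx,
        Metric.mem_closedBall.2 hbd⟩, hb⟩⟩
    refine ⟨g', ?_, ?_, ?_, ?_⟩
    · -- measurability
      intro u hu
      have : g' ⁻¹' u = ⋃ y ∈ range g, (g ⁻¹' {y}) ∩ ((G y) ⁻¹' u) := by
        ext s
        simp only [mem_preimage, mem_iUnion, mem_inter_iff, mem_singleton_iff, exists_prop]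
        constructor
        · intro h; exact ⟨g s, mem_range_self s, rfl, h⟩
        · rintro ⟨y, -, rfl, h⟩; exact h
      rw [this]
      exact MeasurableSet.biUnion hgf.countable fun y _ =>
        ((hgm (measurableSet_singleton y)).inter
          (listPick_measurable (hCmeas y) default L hu))
    · -- finite range
      apply Set.Finite.subset ((htf.insert default).subset ?_ :
        (insert default {x | x ∈ L} : Set B).Finite)
      · rintro _ ⟨s, rfl⟩
        exact listPick_range L s
      · intro x hx
        rcases hx with rfl | hx
        · exact mem_insert _ _
        · exact Set.mem_insert_of_mem _ ((hmemL x).1 hx)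
    · -- approximation
      intro s
      obtain ⟨-, hmem⟩ := listPick_spec (d := default) (hcond s)
      obtain ⟨b, ⟨hb1, -⟩, hb3⟩ := hmem
      exact ⟨b, hb3, Metric.mem_closedBall.1 hb1⟩
    · -- distance to previous
      intro s
      obtain ⟨-, hmem⟩ := listPick_spec (d := default) (hcond s)
      obtain ⟨b, ⟨hb1, hb2⟩, -⟩ := hmem
      calc dist (g' s) (g s) ≤ dist (g' s) b + dist b (g s) := dist_triangle _ _ _
        _ ≤ r + ρ := add_le_add (dist_comm (g' s) b ▸ Metric.mem_closedBall.1 hb1)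
              (Metric.mem_closedBall.1 hb2)
  -- the property at stage n
  set Q : ℕ → (S → B) → Prop := fun n g =>
    Measurable g ∧ (range g).Finite ∧ ∀ s, ∃ b, π b = s ∧ dist b (g s) ≤ (2:ℝ)⁻¹ ^ n with hQ
  have hrpos : ∀ n : ℕ, (0:ℝ) < (2:ℝ)⁻¹ ^ n := fun n => by positivity
  -- base
  obtain ⟨g₀, hg₀⟩ : ∃ g₀, Q 0 g₀ := by
    obtain ⟨g₀, h1, h2, h3, -⟩ := key ((2:ℝ)⁻¹ ^ 0) (hrpos 0)
      (Metric.diam (univ : Set B)) (fun _ => default) measurable_const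
      ((Set.finite_singleton (default : B)).subset (Set.range_subset_iff.2 fun _ => rfl))
      (fun s => by
        obtain ⟨b, hb⟩ := hs s
        exact ⟨b, hb, Metric.dist_le_diam_of_mem isCompact_univ.isBounded
          (mem_univ _) (mem_univ _)⟩)
    exact ⟨g₀, h1, h2, h3⟩
  -- the step as a total function
  have step : ∀ n (g : S → B), ∃ g', Q n g →
      Q (n + 1) g' ∧ ∀ s, dist (g' s) (g s) ≤ (2:ℝ)⁻¹ ^ (n + 1) + (2:ℝ)⁻¹ ^ n := by
    intro n g
    by_cases h : Q n g
    · obtain ⟨g', h1, h2, h3, h4⟩ := key ((2:ℝ)⁻¹ ^ (n + 1)) (hrpos (n + 1))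
        ((2:ℝ)⁻¹ ^ n) g h.1 h.2.1 h.2.2
      exact ⟨g', fun _ => ⟨⟨h1, h2, h3⟩, h4⟩⟩
    · exact ⟨g, fun hg => absurd hg h⟩
  choose Φ hΦ using step
  set f : ℕ → S → B := fun n => Nat.rec g₀ (fun n g => Φ n g) n with hf
  have hfQ : ∀ n, Q n (f n) := by
    intro n
    induction n with
    | zero => exact hg₀
    | succ n ih => exact (hΦ n (f n) ih).1
  have hfd : ∀ n s, dist (f n s) (f (n + 1) s) ≤ 2 * (2:ℝ)⁻¹ ^ n := by
    intro n s
    rw [dist_comm]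
    refine le_trans ((hΦ n (f n) (hfQ n)).2 s) ?_
    have h1 : (2:ℝ)⁻¹ ^ (n + 1) ≤ (2:ℝ)⁻¹ ^ n := by
      apply pow_le_pow_of_le_one (by norm_num) (by norm_num) (Nat.le_succ n)
    linarith
  -- convergence
  have hcauchy : ∀ s, CauchySeq (fun n => f n s) := fun s =>
    cauchySeq_of_le_geometric (2:ℝ)⁻¹ 2 (by norm_num) (fun n => hfd n s)
  have hlim : ∀ s, ∃ b, Tendsto (fun n => f n s) atTop (𝓝 b) := fun s =>
    cauchySeq_tendsto_of_complete (hcauchy s)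
  choose σ hσ using hlim
  refine ⟨σ, ?_, ?_⟩
  · exact measurable_of_tendsto_metrizable (fun n => (hfQ n).1)
      (tendsto_pi_nhds.2 hσ)
  · intro s
    choose b hb1 hb2 using fun n => (hfQ n).2.2 s
    have hbtend : Tendsto b atTop (𝓝 (σ s)) := by
      rw [tendsto_iff_dist_tendsto_zero]
      have hle : ∀ n, dist (b n) (σ s) ≤ (2:ℝ)⁻¹ ^ n + dist (f n s) (σ s) := fun n =>
        (dist_triangle _ (f n s) _).trans (add_le_add (hb2 n) le_rfl)
      have h1 : Tendsto (fun n => (2:ℝ)⁻¹ ^ n + dist (f n s) (σ s)) atTop (𝓝 0) := by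
        have := (tendsto_pow_atTop_nhds_zero_of_lt_one (by norm_num : (0:ℝ) ≤ 2⁻¹)
          (by norm_num : (2:ℝ)⁻¹ < 1)).add
          ((tendsto_iff_dist_tendsto_zero.1 (hσ s)))
        simpa using this
      exact squeeze_zero (fun n => dist_nonneg) hle h1
    have : Tendsto (fun n => π (b n)) atTop (𝓝 (π (σ s))) :=
      (hc.tendsto (σ s)).comp hbtend
    have heq : (fun n => π (b n)) = fun _ => s := funext hb1
    rw [heq] at this
    exact (tendsto_nhds_unique tendsto_const_nhds this).symm

/-- Let `A` be a compact abelian topological group (compact, Hausdorff,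
second-countable) acting continuously and freely on a compact space `B`; let `S = B/A` be the
orbit space with the quotient topology and `π : B → S` the orbit map (modelled here by a
topological quotient map `π` whose fibres are exactly the `A`-orbits).  Let `μS` be a regular
Borel probability measure on `S`.  Then there exists a unique regular Borel probability measure
`μ` on `B` invariant under the action of `A` and satisfying `π₊μ = μS`. -/
theorem stmt2
    {A B S : Type*}
    [AddCommGroup A] [TopologicalSpace A] [IsTopologicalAddGroup A]
    [CompactSpace A] [T2Space A] [SecondCountableTopology A]
    [TopologicalSpace B] [CompactSpace B] [T2Space B] [SecondCountableTopology B]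
    [MeasurableSpace B] [BorelSpace B]
    [TopologicalSpace S] [CompactSpace S] [T2Space S] [SecondCountableTopology S]
    [MeasurableSpace S] [BorelSpace S]
    [AddAction A B] [ContinuousVAdd A B]
    (hfree : ∀ (a : A) (b : B), a +ᵥ b = b → a = 0)
    (π : B → S) (hquot : Topology.IsQuotientMap π)
    (hfib : ∀ b b' : B, π b = π b' ↔ ∃ a : A, a +ᵥ b = b')
    (μS : Measure S) [IsProbabilityMeasure μS] (hreg : μS.Regular) :
    ∃! μ : Measure B,
      IsProbabilityMeasure μ ∧ μ.Regular ∧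
        (∀ a : A, Measure.map (fun b => a +ᵥ b) μ = μ) ∧
        Measure.map π μ = μS := by
  classical
  -- Borel structure on `A` and its Haar probability measure
  letI : MeasurableSpace A := borel A
  haveI : BorelSpace A := ⟨rfl⟩
  set ν : Measure A := Measure.addHaarMeasure ⊤ with hν
  haveI hνprob : IsProbabilityMeasure ν :=
    ⟨by rw [← TopologicalSpace.PositiveCompacts.coe_top (α := A)]
        exact Measure.addHaarMeasure_self⟩
  -- a metric on `B`, and a measurable section of `π`
  letI : MetricSpace B := TopologicalSpace.metrizableSpaceMetric B
  obtain ⟨σ, hσm, hσs⟩ := exists_measurable_section hquot.continuous hquot.surjective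
  -- the candidate measure
  set φ : A × S → B := fun p => p.1 +ᵥ σ p.2 with hφdef
  have hφ : Measurable φ :=
    (continuous_vadd.measurable).comp (measurable_fst.prodMk (hσm.comp measurable_snd))
  set μ : Measure B := Measure.map φ (ν.prod μS) with hμ
  have hπm : Measurable π := hquot.continuous.measurable
  -- basic fact: `π (a +ᵥ b) = π b`
  have hπvadd : ∀ (a : A) (b : B), π (a +ᵥ b) = π b := fun a b =>
    ((hfib b (a +ᵥ b)).2 ⟨a, rfl⟩).symm
  -- `μ` is a probability measure
  haveI hμprob : IsProbabilityMeasure μ := Measure.isProbabilityMeasure_map hφ.aemeasurable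
  -- invariance of `μ`
  have hμinv : ∀ a : A, Measure.map (fun b => a +ᵥ b) μ = μ := by
    intro a
    have hva : Measurable fun b : B => a +ᵥ b := (continuous_const_vadd a).measurable
    rw [hμ, Measure.map_map hva hφ]
    have hcomp : (fun b : B => a +ᵥ b) ∘ φ = φ ∘ Prod.map (a + ·) id := by
      funext p
      exact (add_vadd a p.1 (σ p.2)).symm
    rw [hcomp, ← Measure.map_map hφ ((measurable_const_add a).prodMap measurable_id),
      ← Measure.map_prod_map _ _ (measurable_const_add a) measurable_id,
      map_add_left_eq_self ν a, Measure.map_id]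
  -- pushforward of `μ` is `μS`
  have hμmap : Measure.map π μ = μS := by
    rw [hμ, Measure.map_map hπm hφ]
    have hcomp : π ∘ φ = Prod.snd := by
      funext p
      simp only [Function.comp_apply, hφdef]
      rw [hπvadd, hσs]
    rw [hcomp, Measure.map_snd_prod, measure_univ, one_smul]
  -- the common integral identity for any measure satisfying the conditions
  have main : ∀ μ₁ : Measure B, IsProbabilityMeasure μ₁ →
      (∀ a : A, Measure.map (fun b => a +ᵥ b) μ₁ = μ₁) → Measure.map π μ₁ = μS →
      ∀ f : BoundedContinuousFunction B ℝ≥0,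
        ∫⁻ x, (f x : ℝ≥0∞) ∂μ₁ = ∫⁻ s, (∫⁻ a, (f (a +ᵥ σ s) : ℝ≥0∞) ∂ν) ∂μS := by
    intro μ₁ h1 hinv hmap f
    have hfc : Continuous fun x : B => (f x : ℝ≥0∞) :=
      ENNReal.continuous_coe.comp f.continuous
    have hfm : Measurable fun x : B => (f x : ℝ≥0∞) := hfc.measurable
    have hFm : Measurable fun p : A × B => (f (p.1 +ᵥ p.2) : ℝ≥0∞) :=
      (hfc.comp continuous_vadd).measurable
    set g : B → ℝ≥0∞ := fun x => ∫⁻ a, (f (a +ᵥ x) : ℝ≥0∞) ∂ν with hg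
    have hgm : Measurable g := Measurable.lintegral_prod_left' hFm
    -- invariance of `g` under the action
    have hginv : ∀ (a' : A) (x : B), g (a' +ᵥ x) = g x := by
      intro a' x
      have h1 : ∀ a : A, a +ᵥ (a' +ᵥ x) = (a' + a) +ᵥ x := fun a => by
        rw [← add_vadd, add_comm]
      have hmeas : Measurable fun a : A => (f (a +ᵥ x) : ℝ≥0∞) :=
        (hfc.comp (continuous_id.vadd continuous_const)).measurable
      calc g (a' +ᵥ x) = ∫⁻ a, (f ((a' + a) +ᵥ x) : ℝ≥0∞) ∂ν := by
            simp only [hg, h1]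
        _ = ∫⁻ a, (f (a +ᵥ x) : ℝ≥0∞) ∂(Measure.map (fun a => a' + a) ν) :=
            (lintegral_map hmeas (measurable_const_add a')).symm
        _ = ∫⁻ a, (f (a +ᵥ x) : ℝ≥0∞) ∂ν := by rw [map_add_left_eq_self ν a']
        _ = g x := rfl
    have hgfib : ∀ x : B, g (σ (π x)) = g x := by
      intro x
      obtain ⟨a', ha'⟩ := (hfib x (σ (π x))).1 (hσs (π x)).symm
      rw [← ha', hginv]
    calc ∫⁻ x, (f x : ℝ≥0∞) ∂μ₁
        = ∫⁻ a, (∫⁻ x, (f x : ℝ≥0∞) ∂μ₁) ∂ν := by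
          rw [lintegral_const, measure_univ, mul_one]
      _ = ∫⁻ a, ∫⁻ x, (f (a +ᵥ x) : ℝ≥0∞) ∂μ₁ ∂ν := by
          refine lintegral_congr fun a => ?_
          conv_lhs => rw [← hinv a]
          rw [lintegral_map hfm (continuous_const_vadd a).measurable]
      _ = ∫⁻ x, ∫⁻ a, (f (a +ᵥ x) : ℝ≥0∞) ∂ν ∂μ₁ := lintegral_lintegral_swap hFm.aemeasurable
      _ = ∫⁻ x, g (σ (π x)) ∂μ₁ := lintegral_congr fun x => (hgfib x).symm
      _ = ∫⁻ s, g (σ s) ∂(Measure.map π μ₁) := (lintegral_map (hgm.comp hσm) hπm).symm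
      _ = ∫⁻ s, (∫⁻ a, (f (a +ᵥ σ s) : ℝ≥0∞) ∂ν) ∂μS := by rw [hmap]
  refine ⟨μ, ⟨hμprob, inferInstance, hμinv, hμmap⟩, ?_⟩
  rintro μ' ⟨h1', h2', h3', h4'⟩
  refine ext_of_forall_lintegral_eq_of_IsFiniteMeasure fun f => ?_
  rw [main μ' h1' h3' h4' f, main μ hμprob hμinv hμmap f]
end

section
/- Let k ≥ 1 and let B_0, B_1, …, B_k together with compact abelian groups A_1, …, A_k form a k-fold compact abelian bundle in which B_0 is a one-point space. Then there exists a unique regular Borel probability measure μ on B_k with the following property: for every i ∈ {1,…,k}, the pushforward measure (π_i)_*μ on B_i is invariant under the action of A_i (where π_i : B_k → B_i is the composite projection, and π_k is the identity). -/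
open MeasureTheory Topology Set
open scoped ENNReal

section OneLevel

variable {G X Y : Type*}
  [AddCommGroup G] [TopologicalSpace G] [IsTopologicalAddGroup G]
  [CompactSpace G] [T2Space G] [SecondCountableTopology G]
  [MeasurableSpace G] [BorelSpace G]
  [TopologicalSpace X] [CompactSpace X] [T2Space X] [SecondCountableTopology X]
  [MeasurableSpace X] [BorelSpace X]
  [TopologicalSpace Y] [CompactSpace Y] [T2Space Y] [SecondCountableTopology Y]
  [MeasurableSpace Y] [BorelSpace Y]

theorem oneLevel (π : X → Y) (hq : Topology.IsQuotientMap π)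
    (act : G → X → X)
    (hadd : ∀ a b x, act (a + b) x = act a (act b x))
    (hcont : Continuous fun p : G × X => act p.1 p.2)
    (hfib : ∀ x y, π x = π y ↔ ∃ a, act a y = x)
    (νY : Measure Y) [IsProbabilityMeasure νY] :
    ∃ ν : Measure X, IsProbabilityMeasure ν ∧ Measure.map π ν = νY ∧
      (∀ a, Measure.map (act a) ν = ν) ∧
      ∀ ν' : Measure X, IsProbabilityMeasure ν' → Measure.map π ν' = νY →
        (∀ a, Measure.map (act a) ν' = ν') → ν' = ν := by
  classical
  haveI : Nonempty G := ⟨0⟩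
  set haar : Measure G := Measure.addHaarMeasure ⊤ with hhaar
  haveI hGprob : IsProbabilityMeasure haar := by
    constructor
    rw [hhaar, ← TopologicalSpace.PositiveCompacts.coe_top (α := G)]
    exact Measure.addHaarMeasure_self
  -- continuity/measurability of the pieces
  have hacont : ∀ a : G, Continuous (act a) := fun a =>
    hcont.comp (Continuous.prodMk_right a)
  have hxcont : ∀ x : X, Continuous fun a : G => act a x := fun x =>
    hcont.comp (continuous_id.prodMk continuous_const)
  have hπc : Continuous π := hq.continuous
  -- the averaging map is well defined on fibers
  have hmapadd : ∀ c : G, Measure.map (fun a => a + c) haar = haar := by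
    intro c
    have : (fun a : G => a + c) = fun a : G => c + a := by
      funext a; exact add_comm a c
    rw [this]
    exact map_add_left_eq_self haar c
  have hwd : ∀ x y : X, π x = π y →
      Measure.map (fun a => act a x) haar = Measure.map (fun a => act a y) haar := by
    intro x y hxy
    obtain ⟨c, hc⟩ := (hfib x y).1 hxy
    have h1 : (fun a : G => act a x) = (fun a : G => act a y) ∘ (fun a : G => a + c) := by
      funext a
      simp only [Function.comp_apply, ← hc, ← hadd]
    rw [h1, ← Measure.map_map (hxcont y).measurable (measurable_add_const c), hmapadd]
  -- nonemptiness
  have hYne : Nonempty Y := by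
    rcases isEmpty_or_nonempty Y with h | h
    · exfalso
      have h1 : νY univ = 1 := measure_univ
      rw [Set.univ_eq_empty_iff.2 h, measure_empty] at h1
      exact zero_ne_one h1
    · exact h
  have hsec : ∀ b : Y, ∃ x : X, π x = b := fun b => hq.surjective b
  set sec : Y → X := fun b => (hsec b).choose with hsecdef
  have hsecπ : ∀ b, π (sec b) = b := fun b => (hsec b).choose_spec
  -- the fiber Haar kernel
  set ζ : Y → Measure X := fun b => Measure.map (fun a => act a (sec b)) haar with hζdef
  have hζπ : ∀ x : X, ζ (π x) = Measure.map (fun a => act a x) haar := by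
    intro x
    exact hwd _ _ (hsecπ (π x))
  haveI hζprob : ∀ b, IsProbabilityMeasure (ζ b) := fun b =>
    Measure.isProbabilityMeasure_map (hxcont (sec b)).measurable.aemeasurable
  have hπact : ∀ (a : G) (x : X), π (act a x) = π x := fun a x => (hfib _ _).2 ⟨a, rfl⟩
  -- fiber measure of preimages
  have hζfib : ∀ (b : Y) (s : Set Y), MeasurableSet s →
      ζ b (π ⁻¹' s) = s.indicator 1 b := by
    intro b s hs
    rw [hζdef]
    rw [Measure.map_apply (hxcont (sec b)).measurable (hπc.measurable hs)]
    have hpre : (fun a : G => act a (sec b)) ⁻¹' (π ⁻¹' s) = if b ∈ s then univ else ∅ := by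
      ext a
      simp only [mem_preimage, hπact, hsecπ]
      by_cases hb : b ∈ s <;> simp [hb]
    by_cases hb : b ∈ s
    · rw [hpre, if_pos hb, Set.indicator_of_mem hb, measure_univ, Pi.one_apply]
    · rw [hpre, if_neg hb, Set.indicator_of_notMem hb, measure_empty]
  -- measurability of the kernel
  have hM : ∀ ⦃s : Set X⦄, MeasurableSet s → Measurable fun b => ζ b s := by
    have hgen : (inferInstance : MeasurableSpace X) =
        MeasurableSpace.generateFrom {t : Set X | IsClosed t} := by
      rw [BorelSpace.measurable_eq (α := X), borel_eq_generateFrom_isClosed]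
    refine MeasurableSpace.induction_on_inter hgen ?_ ?_ ?_ ?_ ?_
    · intro s hs t ht _
      exact hs.inter ht
    · simp only [measure_empty]
      exact measurable_const
    · -- closed sets
      intro C hC
      have hCc : IsClosed C := hC
      have hopen : ∀ c : ℝ≥0∞, IsOpen {b : Y | ζ b C < c} := by
        intro c
        rw [← hq.isOpen_preimage]
        have hset : π ⁻¹' {b : Y | ζ b C < c}
            = {x : X | haar ((fun a : G => act a x) ⁻¹' C) < c} := by
          ext x
          simp only [mem_preimage, mem_setOf_eq, hζπ,
            Measure.map_apply (hxcont x).measurable hCc.measurableSet]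
        rw [hset]
        rw [isOpen_iff_mem_nhds]
        intro x hx
        have hKC : haar ((fun a : G => act a x) ⁻¹' C) < c := hx
        obtain ⟨U, hKU, hUo, hUc⟩ :=
          Set.exists_isOpen_lt_of_lt ((fun a : G => act a x) ⁻¹' C) c hKC
        have hUcc : IsCompact Uᶜ := hUo.isClosed_compl.isCompact
        have hev : ∀ᶠ y in nhds x, ∀ a ∈ Uᶜ, act a y ∉ C := by
          apply hUcc.eventually_forall_of_forall_eventually
          intro a ha
          have hax : act a x ∉ C := fun hmem => ha (hKU hmem)
          have : IsOpen {z : X × G | act z.2 z.1 ∉ C} :=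
            (hCc.isOpen_compl).preimage (hcont.comp continuous_swap)
          exact this.mem_nhds hax
        refine Filter.mem_of_superset hev ?_
        intro y hy
        have hsub : (fun a : G => act a y) ⁻¹' C ⊆ U := by
          intro a ha
          by_contra haU
          exact hy a haU ha
        exact lt_of_le_of_lt (measure_mono hsub) hUc
      apply measurable_of_Iio
      intro c
      exact (hopen c).measurableSet
    · -- complements
      intro t ht hmt
      have : ∀ b, ζ b tᶜ = 1 - ζ b t := fun b => prob_compl_eq_one_sub ht
      simp only [this]
      exact Measurable.const_sub hmt 1
    · -- disjoint unions
      intro f hdisj hfm hrec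
      have : ∀ b, ζ b (⋃ i, f i) = ∑' i, ζ b (f i) := fun b => measure_iUnion hdisj hfm
      simp only [this]
      exact Measurable.ennreal_tsum hrec
  have hζmeas : Measurable ζ := Measure.measurable_of_measurable_coe ζ fun s hs => hM hs
  -- the constructed measure
  set ν : Measure X := νY.bind ζ with hνdef
  have hbind : ∀ s : Set X, MeasurableSet s → ν s = ∫⁻ b, ζ b s ∂νY := fun s hs =>
    Measure.bind_apply hs hζmeas.aemeasurable
  haveI hνprob : IsProbabilityMeasure ν := by
    constructor
    rw [hbind univ MeasurableSet.univ]
    simp [measure_univ]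
  have hνπ : Measure.map π ν = νY := by
    ext s hs
    rw [Measure.map_apply hπc.measurable hs, hbind _ (hπc.measurable hs)]
    calc ∫⁻ b, ζ b (π ⁻¹' s) ∂νY = ∫⁻ b, s.indicator 1 b ∂νY :=
          lintegral_congr fun b => hζfib b s hs
      _ = νY s := lintegral_indicator_one hs
  -- invariance of the kernel and of ν
  have hζinv : ∀ (a : G) (b : Y), Measure.map (act a) (ζ b) = ζ b := by
    intro a b
    rw [hζdef]
    rw [Measure.map_map (hacont a).measurable (hxcont (sec b)).measurable]
    have h1 : act a ∘ (fun c : G => act c (sec b))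
        = (fun c : G => act c (sec b)) ∘ (fun c : G => a + c) := by
      funext c
      simp only [Function.comp_apply, ← hadd]
    rw [h1, ← Measure.map_map (hxcont (sec b)).measurable (measurable_const_add a),
      map_add_left_eq_self haar a]
  have hνinv : ∀ a : G, Measure.map (act a) ν = ν := by
    intro a
    ext s hs
    rw [Measure.map_apply (hacont a).measurable hs,
      hbind _ ((hacont a).measurable hs), hbind s hs]
    refine lintegral_congr fun b => ?_
    rw [← Measure.map_apply (hacont a).measurable hs, hζinv a b]
  -- uniqueness
  refine ⟨ν, hνprob, hνπ, hνinv, ?_⟩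
  intro ν' hprob' hπ' hinv'
  haveI := hprob'
  ext s hs
  set Q : Set (G × X) := (fun p : G × X => act p.1 p.2) ⁻¹' s with hQdef
  have hQm : MeasurableSet Q := hcont.measurable hs
  have h1 : ∀ a : G, ν' ((act a) ⁻¹' s) = ν' s := by
    intro a
    conv_rhs => rw [← hinv' a]
    rw [Measure.map_apply (hacont a).measurable hs]
  have step1 : ν' s = ∫⁻ a, ν' ((act a) ⁻¹' s) ∂haar := by
    simp only [h1]
    rw [lintegral_const, measure_univ, mul_one]
  have step2 : ∀ a : G, ν' ((act a) ⁻¹' s) = ∫⁻ x, Q.indicator 1 (a, x) ∂ν' := by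
    intro a
    have h2 : ∀ x : X, Q.indicator 1 (a, x) = ((act a) ⁻¹' s).indicator (1 : X → ℝ≥0∞) x := by
      intro x
      simp only [Set.indicator_apply, hQdef, mem_preimage, Pi.one_apply]
    simp only [h2]
    exact (lintegral_indicator_one ((hacont a).measurable hs)).symm
  have step3 : ∫⁻ a, ∫⁻ x, Q.indicator 1 (a, x) ∂ν' ∂haar
      = ∫⁻ x, ∫⁻ a, Q.indicator 1 (a, x) ∂haar ∂ν' := by
    apply lintegral_lintegral_swap
    exact ((measurable_one.indicator hQm).aemeasurable)
  have step4 : ∀ x : X, ∫⁻ a, Q.indicator 1 (a, x) ∂haar = ζ (π x) s := by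
    intro x
    have h2 : ∀ a : G, Q.indicator 1 (a, x) = ((fun a : G => act a x) ⁻¹' s).indicator
        (1 : G → ℝ≥0∞) a := by
      intro a
      simp only [Set.indicator_apply, hQdef, mem_preimage, Pi.one_apply]
    simp only [h2]
    rw [lintegral_indicator_one ((hxcont x).measurable hs), hζπ x,
      Measure.map_apply (hxcont x).measurable hs]
  calc ν' s = ∫⁻ a, ν' ((act a) ⁻¹' s) ∂haar := step1
    _ = ∫⁻ a, ∫⁻ x, Q.indicator 1 (a, x) ∂ν' ∂haar := lintegral_congr step2
    _ = ∫⁻ x, ∫⁻ a, Q.indicator 1 (a, x) ∂haar ∂ν' := step3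
    _ = ∫⁻ x, ζ (π x) s ∂ν' := lintegral_congr step4
    _ = ∫⁻ b, ζ b s ∂(Measure.map π ν') := (lintegral_map (hM hs) hπc.measurable).symm
    _ = ∫⁻ b, ζ b s ∂νY := by rw [hπ']
    _ = ν s := (hbind s hs).symm

end OneLevel

/-- Let `k ≥ 1` and let `B 0, …, B k` together with compact abelian groups
`A 1, …, A k` form a `k`-fold compact abelian bundle (each `B i.succ` carries a continuous free
action of `A i`, and the bonding maps `proj` are continuous surjective topological quotient maps
whose fibres are exactly the orbits), in which `B 0` is a one-point space.  Then there exists a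
unique regular Borel probability measure `μ` on `B k` such that for every `i ∈ {1,…,k}` the
pushforward of `μ` to `B i` is invariant under the action of `A i`. -/
theorem stmt3 (k : ℕ) (hk : 1 ≤ k)
    (B : Fin (k+1) → Type*)
    [∀ i, TopologicalSpace (B i)] [∀ i, CompactSpace (B i)] [∀ i, T2Space (B i)]
    [∀ i, SecondCountableTopology (B i)] [∀ i, MeasurableSpace (B i)] [∀ i, BorelSpace (B i)]
    (A : Fin k → Type*)
    [∀ i, AddCommGroup (A i)] [∀ i, TopologicalSpace (A i)] [∀ i, IsTopologicalAddGroup (A i)]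
    [∀ i, CompactSpace (A i)] [∀ i, T2Space (A i)] [∀ i, SecondCountableTopology (A i)]
    (act : ∀ i : Fin k, A i → B i.succ → B i.succ)
    (act_zero : ∀ i x, act i 0 x = x)
    (act_add : ∀ i a b x, act i (a + b) x = act i a (act i b x))
    (act_cont : ∀ i, Continuous fun p : A i × B i.succ => act i p.1 p.2)
    (act_free : ∀ i a x, act i a x = x → a = 0)
    (proj : ∀ i j : Fin (k+1), i ≤ j → B j → B i)
    (proj_self : ∀ i (h : i ≤ i) x, proj i i h x = x)
    (proj_comp : ∀ i j l (hij : i ≤ j) (hjl : j ≤ l) (x : B l),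
      proj i l (le_trans hij hjl) x = proj i j hij (proj j l hjl x))
    (proj_cont : ∀ i j (h : i ≤ j), Continuous (proj i j h))
    (proj_quot : ∀ i : Fin k,
      Topology.IsQuotientMap (proj i.castSucc i.succ (Fin.castSucc_lt_succ (i := i)).le))
    (proj_fib : ∀ (i : Fin k) (x y : B i.succ),
      proj i.castSucc i.succ (Fin.castSucc_lt_succ (i := i)).le x
        = proj i.castSucc i.succ (Fin.castSucc_lt_succ (i := i)).le y ↔ ∃ a : A i, act i a y = x)
    (hB0 : Nonempty (B 0)) (hB0' : Subsingleton (B 0)) :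
    ∃! μ : Measure (B (Fin.last k)),
      IsProbabilityMeasure μ ∧ μ.Regular ∧
        ∀ (i : Fin k) (a : A i),
          Measure.map (act i a) (Measure.map (proj i.succ (Fin.last k) (Fin.le_last _)) μ)
            = Measure.map (proj i.succ (Fin.last k) (Fin.le_last _)) μ := by
  classical
  have key : ∀ i : Fin (k+1), ∃ μ : Measure (B i),
      (IsProbabilityMeasure μ ∧ ∀ (j : Fin k) (h : j.succ ≤ i) (a : A j),
        Measure.map (act j a) (Measure.map (proj j.succ i h) μ)
          = Measure.map (proj j.succ i h) μ) ∧
      ∀ μ' : Measure (B i),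
        (IsProbabilityMeasure μ' ∧ ∀ (j : Fin k) (h : j.succ ≤ i) (a : A j),
          Measure.map (act j a) (Measure.map (proj j.succ i h) μ')
            = Measure.map (proj j.succ i h) μ') → μ' = μ := by
    intro i
    induction i using Fin.induction with
    | zero =>
      refine ⟨Measure.dirac hB0.some, ⟨inferInstance, ?_⟩, ?_⟩
      · intro j h a
        exfalso
        have hv := Fin.le_def.mp h
        simp only [Fin.val_succ, Fin.val_zero] at hv
        omega
      · intro μ' ⟨hp', _⟩
        haveI := hp'
        ext s hs
        rcases s.eq_empty_or_nonempty with rfl | hne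
        · simp
        · have hsu : s = Set.univ := by
            apply Set.eq_univ_of_forall
            intro y
            obtain ⟨x, hx⟩ := hne
            rwa [Subsingleton.elim y x]
          subst hsu
          simp [measure_univ]
    | succ i IH =>
      obtain ⟨μi, ⟨hμip, hμiinv⟩, hμiu⟩ := IH
      haveI := hμip
      letI : MeasurableSpace (A i) := borel (A i)
      haveI : BorelSpace (A i) := ⟨rfl⟩
      obtain ⟨ν, hνp, hνπ, hνinv, hνu⟩ :=
        oneLevel (proj i.castSucc i.succ (Fin.castSucc_lt_succ (i := i)).le) (proj_quot i)
          (act i) (fun a b x => act_add i a b x) (act_cont i)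
          (fun x y => proj_fib i x y) μi
      have hid : ∀ (h : i.succ ≤ i.succ), proj i.succ i.succ h = id := fun h =>
        funext fun x => proj_self _ _ x
      have hdec : ∀ (j : Fin k), j.succ ≤ i.succ → j = i ∨ j.succ ≤ i.castSucc := by
        intro j hj
        have hv := Fin.le_def.mp hj
        simp only [Fin.val_succ] at hv
        by_cases hji : j.val = i.val
        · exact Or.inl (Fin.ext hji)
        · refine Or.inr ?_
          rw [Fin.le_def]
          simp only [Fin.val_succ, Fin.coe_castSucc]
          omega
      have hfact : ∀ (j : Fin k) (h' : j.succ ≤ i.castSucc) (μ'' : Measure (B i.succ)),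
          Measure.map (proj j.succ i.succ (le_trans h' (Fin.castSucc_lt_succ (i := i)).le)) μ''
            = Measure.map (proj j.succ i.castSucc h')
                (Measure.map (proj i.castSucc i.succ (Fin.castSucc_lt_succ (i := i)).le) μ'') := by
        intro j h' μ''
        rw [Measure.map_map (proj_cont _ _ _).measurable (proj_cont _ _ _).measurable]
        congr 1
        funext x
        exact proj_comp _ _ _ h' _ x
      refine ⟨ν, ⟨hνp, ?_⟩, ?_⟩
      · intro j h a
        rcases hdec j h with hji | h'
        · subst hji
          rw [hid h, Measure.map_id]
          exact hνinv a
        · have e : Measure.map (proj j.succ i.succ h) ν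
              = Measure.map (proj j.succ i.castSucc h') (Measure.map
                  (proj i.castSucc i.succ (Fin.castSucc_lt_succ (i := i)).le) ν) := hfact j h' ν
          rw [e, hνπ]
          exact hμiinv j h' a
      · intro μ' ⟨hp', hinv'⟩
        haveI := hp'
        have hπμ' : Measure.map (proj i.castSucc i.succ (Fin.castSucc_lt_succ (i := i)).le) μ' = μi := by
          apply hμiu
          refine ⟨Measure.isProbabilityMeasure_map (proj_cont _ _ _).measurable.aemeasurable, ?_⟩
          intro j h' a
          rw [← hfact j h' μ']
          exact hinv' j _ a
        have hact' : ∀ a : A i, Measure.map (act i a) μ' = μ' := by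
          intro a
          have h2 := hinv' i (le_refl i.succ) a
          rwa [hid, Measure.map_id] at h2
        exact hνu μ' hp' hπμ' hact'
  obtain ⟨μ, ⟨hp, hinv⟩, hu⟩ := key (Fin.last k)
  haveI := hp
  have hreg : μ.Regular := by infer_instance
  refine ⟨μ, ⟨hp, hreg, fun i a => hinv i (Fin.le_last _) a⟩, ?_⟩
  intro μ' ⟨hp', hreg', hinv'⟩
  exact hu μ' ⟨hp', fun j h a => hinv' j a⟩
end

section
/- Let k ≥ 1 and let B_0, B_1, …, B_k together with compact abelian groups A_1, …, A_k form a k-fold compact abelian bundle, where now B_0 is an arbitrary compact space. Then for every x ∈ B_0 there exists a unique regular Borel probability measure μ_x on B_k concentrated on the fiber π_0⁻¹(x) such that for every i ∈ {1,…,k} the pushforward (π_i)_*μ_x is invariant under the action of A_i on B_i; moreover, the family {μ_x : x ∈ B_0} is a continuous system of measures on π_0 : B_k → B_0, i.e. for every continuous f : B_k → ℂ the function x ↦ ∫ f dμ_x is continuous on B_0. -/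
open MeasureTheory

set_option linter.unusedSectionVars false
open MeasureTheory Topology Set
open scoped ENNReal NNReal BoundedContinuousFunction

section Step

variable {G X Y : Type*}
  [AddCommGroup G] [TopologicalSpace G] [IsTopologicalAddGroup G]
  [CompactSpace G] [T2Space G] [SecondCountableTopology G]
  [MeasurableSpace G] [BorelSpace G]
  [TopologicalSpace X] [CompactSpace X] [T2Space X] [SecondCountableTopology X]
  [MeasurableSpace X] [BorelSpace X]
  [TopologicalSpace Y] [CompactSpace Y] [T2Space Y] [SecondCountableTopology Y]
  [MeasurableSpace Y] [BorelSpace Y]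

/-- Normalized Haar measure on a compact abelian group. -/
noncomputable def haarG (G : Type*) [AddCommGroup G] [TopologicalSpace G]
    [IsTopologicalAddGroup G] [CompactSpace G] [T2Space G] [MeasurableSpace G] [BorelSpace G] :
    Measure G :=
  letI : Nonempty G := ⟨0⟩
  Measure.addHaarMeasure ⊤

instance haarG_isAddLeftInvariant : (haarG G).IsAddLeftInvariant := by
  letI : Nonempty G := ⟨0⟩
  exact Measure.isAddLeftInvariant_addHaarMeasure ⊤

instance haarG_prob : IsProbabilityMeasure (haarG G) := by
  letI : Nonempty G := ⟨0⟩
  exact IsProbabilityMeasure.mk Measure.addHaarMeasure_self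

lemma haarG_map_add_left (a : G) : (haarG G).map (a + ·) = haarG G := by
  letI : Nonempty G := ⟨0⟩
  exact MeasureTheory.map_add_left_eq_self _ a

lemma haarG_map_add_right (a : G) : (haarG G).map (· + a) = haarG G := by
  have : (fun b : G => b + a) = (a + ·) := by funext b; exact add_comm b a
  rw [this, haarG_map_add_left]

/-- Integrability of continuous functions on compact spaces w.r.t. finite measures. -/
lemma cont_integrable {Z E : Type*} [TopologicalSpace Z] [CompactSpace Z] [MeasurableSpace Z]
    [OpensMeasurableSpace Z] [NormedAddCommGroup E] {h : Z → E} (hc : Continuous h)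
    (μ : Measure Z) [IsFiniteMeasure μ] : Integrable h μ :=
  hc.integrable_of_hasCompactSupport (HasCompactSupport.of_compactSpace h)

lemma step_average {E : Type*} [NormedAddCommGroup E] [NormedSpace ℝ E]
    (act : G → X → X)
    (act_add : ∀ a b x, act (a + b) x = act a (act b x))
    (act_cont : Continuous fun q : G × X => act q.1 q.2)
    (p : X → Y) (hq : Topology.IsQuotientMap p)
    (hfib : ∀ x y : X, p x = p y ↔ ∃ a, act a y = x)
    (f : C(X, E)) :
    ∃ g : C(Y, E), ∀ x : X, g (p x) = ∫ a, f (act a x) ∂(haarG G) := by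
  haveI : IsProbabilityMeasure (haarG G) := haarG_prob
  set F : X → E := fun x => ∫ a, f (act a x) ∂(haarG G) with hF
  have hcont1 : ∀ x : X, Continuous fun a : G => act a x := fun x =>
    act_cont.comp (continuous_id.prodMk continuous_const)
  have hcont2 : ∀ a : G, Continuous fun x : X => act a x := fun a =>
    act_cont.comp (continuous_const.prodMk continuous_id)
  have hFc : Continuous F := by
    apply continuous_of_dominated (bound := fun _ : G => ‖f‖)
    · exact fun x => (f.continuous.comp (hcont1 x)).aestronglyMeasurable
    · intro x
      filter_upwards with a
      exact f.norm_coe_le_norm _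
    · exact integrable_const _
    · filter_upwards with a
      exact f.continuous.comp (hcont2 a)
  have hFinv : ∀ (a₀ : G) (x : X), F (act a₀ x) = F x := by
    intro a₀ x
    have key : ∫ a, f (act a x) ∂(haarG G) = ∫ a, f (act (a + a₀) x) ∂(haarG G) := by
      conv_lhs => rw [← haarG_map_add_right (G := G) a₀]
      exact integral_map (measurable_add_const a₀).aemeasurable
        ((f.continuous.comp (hcont1 x)).aestronglyMeasurable)
    have h1 : F (act a₀ x) = ∫ a, f (act (a + a₀) x) ∂(haarG G) := by
      simp only [hF]
      congr 1
      funext a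
      rw [act_add]
    rw [h1, ← key]
  have hFp : ∀ x y : X, p x = p y → F x = F y := by
    intro x y h
    obtain ⟨a, ha⟩ := (hfib x y).mp h
    rw [← ha, hFinv]
  have hsec : ∀ y : Y, p (Function.surjInv hq.surjective y) = y :=
    fun y => Function.surjInv_eq hq.surjective y
  have hgc : Continuous (F ∘ Function.surjInv hq.surjective) := by
    rw [hq.continuous_iff]
    have : (F ∘ Function.surjInv hq.surjective) ∘ p = F := by
      funext x
      exact hFp _ _ (hsec (p x))
    rw [this]
    exact hFc
  exact ⟨⟨F ∘ Function.surjInv hq.surjective, hgc⟩, fun x => hFp _ _ (hsec (p x))⟩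


lemma step_exists
    (act : G → X → X)
    (act_add : ∀ a b x, act (a + b) x = act a (act b x))
    (act_cont : Continuous fun q : G × X => act q.1 q.2)
    (p : X → Y) (hq : Topology.IsQuotientMap p)
    (hfib : ∀ x y : X, p x = p y ↔ ∃ a, act a y = x) :
    ∃ κ : Y → Measure X,
      Measurable κ ∧ (∀ y, IsProbabilityMeasure (κ y)) ∧
      (∀ (y : Y) (s : Set Y), MeasurableSet s → κ y (p ⁻¹' s) = s.indicator 1 y) ∧
      (∀ (a : G) (y : Y), (κ y).map (act a) = κ y) ∧
      (∀ f : C(X, ℂ), ∃ g : C(Y, ℂ), ∀ y, ∫ x, f x ∂(κ y) = g y) := by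
  haveI : IsProbabilityMeasure (haarG G) := haarG_prob
  have hcont1 : ∀ x : X, Continuous fun a : G => act a x := fun x =>
    act_cont.comp (continuous_id.prodMk continuous_const)
  have hcont2 : ∀ a : G, Continuous fun x : X => act a x := fun a =>
    act_cont.comp (continuous_const.prodMk continuous_id)
  set sInv : Y → X := Function.surjInv hq.surjective with hsInv
  have hsec : ∀ y : Y, p (sInv y) = y := fun y => Function.surjInv_eq hq.surjective y
  have horb : ∀ (a : G) (y : Y), p (act a (sInv y)) = y := by
    intro a y
    exact ((hfib (act a (sInv y)) (sInv y)).mpr ⟨a, rfl⟩).trans (hsec y)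
  set κ : Y → Measure X := fun y => (haarG G).map (fun a => act a (sInv y)) with hκ
  have hκprob : ∀ y, IsProbabilityMeasure (κ y) := fun y =>
    Measure.isProbabilityMeasure_map (hcont1 (sInv y)).measurable.aemeasurable
  -- integral formula
  have hint : ∀ {E : Type} [NormedAddCommGroup E] [NormedSpace ℝ E] (f : C(X, E)) (y : Y),
      ∫ x, f x ∂(κ y) = ∫ a, f (act a (sInv y)) ∂(haarG G) := by
    intro E _ _ f y
    rw [hκ]
    exact integral_map (hcont1 (sInv y)).measurable.aemeasurable
      f.continuous.aestronglyMeasurable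
  have hlint : ∀ (f : X →ᵇ ℝ≥0), ∃ g : C(Y, ℝ), (∀ y, 0 ≤ g y) ∧
      (∀ y, ∫⁻ x, (f x : ℝ≥0∞) ∂(κ y) = ENNReal.ofReal (g y)) := by
    intro f
    set fr : C(X, ℝ) := ⟨fun x => (f x : ℝ), NNReal.continuous_coe.comp f.continuous⟩ with hfr
    obtain ⟨g, hg⟩ := step_average act act_add act_cont p hq hfib fr
    have hgy : ∀ y, g y = ∫ a, fr (act a (sInv y)) ∂(haarG G) := by
      intro y
      have h3 := hg (sInv y)
      rwa [hsec y] at h3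
    refine ⟨g, ?_, ?_⟩
    · intro y
      rw [hgy y]
      exact integral_nonneg fun a => (f _).2
    · intro y
      rw [lintegral_coe_eq_integral _ (cont_integrable fr.continuous (κ y))]
      congr 1
      exact (hint fr y).trans (hgy y).symm
  -- measurability
  have hκmeas : Measurable κ := by
    apply Measure.measurable_of_measurable_coe
    have hclosed : ∀ F : Set X, IsClosed F → Measurable fun y => κ y F := by
      intro F hF
      have happr : ∀ n : ℕ, Measurable fun y => ∫⁻ x, (hF.apprSeq n x : ℝ≥0∞) ∂(κ y) := by
        intro n
        obtain ⟨g, -, hg⟩ := hlint (hF.apprSeq n)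
        have : (fun y => ∫⁻ x, (hF.apprSeq n x : ℝ≥0∞) ∂(κ y)) =
            fun y => ENNReal.ofReal (g y) := funext hg
        rw [this]
        exact (ENNReal.continuous_ofReal.comp g.continuous).measurable
      exact ENNReal.measurable_of_tendsto' Filter.atTop happr
        (tendsto_pi_nhds.mpr fun y => HasOuterApproxClosed.tendsto_lintegral_apprSeq hF (κ y))
    intro s hs
    have hgen : (inferInstance : MeasurableSpace X) =
        MeasurableSpace.generateFrom {t : Set X | IsClosed t} := by
      rw [BorelSpace.measurable_eq (α := X), borel_eq_generateFrom_isClosed]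
    refine MeasurableSpace.induction_on_inter (C := fun s _ => Measurable fun y => κ y s)
      hgen isPiSystem_isClosed ?_ ?_ ?_ ?_ s hs
    · simp only [measure_empty]; exact measurable_const
    · exact fun t ht => hclosed t ht
    · intro t htm iht
      have : ∀ y, κ y tᶜ = 1 - κ y t := by
        intro y
        haveI := hκprob y
        rw [measure_compl htm (measure_ne_top _ _), measure_univ]
      simp only [this]
      exact Measurable.const_sub iht 1
    · intro f hd hfm ihf
      have : ∀ y, κ y (⋃ n, f n) = ∑' n, κ y (f n) := fun y => measure_iUnion hd hfm
      simp only [this]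
      exact Measurable.ennreal_tsum ihf
  -- fiber formula
  have hκfib : ∀ (y : Y) (s : Set Y), MeasurableSet s → κ y (p ⁻¹' s) = s.indicator 1 y := by
    intro y s hs
    rw [hκ, Measure.map_apply (hcont1 (sInv y)).measurable
      (hq.continuous.measurable hs)]
    have : (fun a : G => act a (sInv y)) ⁻¹' (p ⁻¹' s) = {a : G | y ∈ s} := by
      ext a
      simp [Set.mem_preimage, horb a y]
    rw [this]
    by_cases hy : y ∈ s
    · simp [hy, Set.indicator_of_mem, measure_univ]
    · simp [hy, Set.indicator_of_notMem]
  -- invariance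
  have hκinv : ∀ (a : G) (y : Y), (κ y).map (act a) = κ y := by
    intro a y
    rw [hκ, Measure.map_map (hcont2 a).measurable (hcont1 (sInv y)).measurable]
    have h1 : (act a ∘ fun a' : G => act a' (sInv y)) =
        (fun a' : G => act a' (sInv y)) ∘ (fun a' => a + a') := by
      funext a'
      simp only [Function.comp]
      rw [← act_add]
    rw [h1, ← Measure.map_map (hcont1 (sInv y)).measurable (measurable_const_add a),
      haarG_map_add_left]
  refine ⟨κ, hκmeas, hκprob, hκfib, hκinv, ?_⟩
  intro f
  obtain ⟨g, hg⟩ := step_average act act_add act_cont p hq hfib f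
  refine ⟨g, fun y => ?_⟩
  have h3 := hg (sInv y)
  rw [hsec y] at h3
  rw [hint f y, ← h3]


lemma step_unique
    (act : G → X → X)
    (act_add : ∀ a b x, act (a + b) x = act a (act b x))
    (act_cont : Continuous fun q : G × X => act q.1 q.2)
    (p : X → Y) (hq : Topology.IsQuotientMap p)
    (hfib : ∀ x y : X, p x = p y ↔ ∃ a, act a y = x)
    (μ ν : Measure X) [IsProbabilityMeasure μ] [IsProbabilityMeasure ν]
    (hpr : μ.map p = ν.map p)
    (hμ : ∀ a, μ.map (act a) = μ) (hν : ∀ a, ν.map (act a) = ν) : μ = ν := by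
  haveI : IsProbabilityMeasure (haarG G) := haarG_prob
  have hcont1 : ∀ x : X, Continuous fun a : G => act a x := fun x =>
    act_cont.comp (continuous_id.prodMk continuous_const)
  have hcont2 : ∀ a : G, Continuous fun x : X => act a x := fun a =>
    act_cont.comp (continuous_const.prodMk continuous_id)
  apply ext_of_forall_lintegral_eq_of_IsFiniteMeasure
  intro f
  set fr : C(X, ℝ) := ⟨fun x => (f x : ℝ), NNReal.continuous_coe.comp f.continuous⟩ with hfr
  obtain ⟨g, hg⟩ := step_average act act_add act_cont p hq hfib fr
  have key : ∀ (m : Measure X), IsProbabilityMeasure m → (∀ a, m.map (act a) = m) →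
      ∫ x, fr x ∂m = ∫ y, g y ∂(m.map p) := by
    intro m hm hminv
    have h1 : ∀ a : G, ∫ x, fr (act a x) ∂m = ∫ x, fr x ∂m := by
      intro a
      conv_rhs => rw [← hminv a]
      rw [integral_map (hcont2 a).measurable.aemeasurable fr.continuous.aestronglyMeasurable]
    have h2 : Integrable (Function.uncurry fun (a : G) (x : X) => fr (act a x))
        ((haarG G).prod m) := by
      apply cont_integrable
      exact fr.continuous.comp act_cont
    calc ∫ x, fr x ∂m = ∫ a, (∫ x, fr (act a x) ∂m) ∂(haarG G) := by
          simp_rw [h1]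
          simp [measure_univ]
      _ = ∫ x, (∫ a, fr (act a x) ∂(haarG G)) ∂m := integral_integral_swap h2
      _ = ∫ x, g (p x) ∂m := by
          apply integral_congr_ae
          filter_upwards with x
          exact (hg x).symm
      _ = ∫ y, g y ∂(m.map p) :=
          (integral_map hq.continuous.measurable.aemeasurable
            g.continuous.aestronglyMeasurable).symm
  have hreal : ∫ x, fr x ∂μ = ∫ x, fr x ∂ν := by
    rw [key μ ‹_› hμ, key ν ‹_› hν, hpr]
  rw [lintegral_coe_eq_integral _ (cont_integrable fr.continuous μ),
    lintegral_coe_eq_integral _ (cont_integrable fr.continuous ν)]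
  exact congrArg ENNReal.ofReal hreal

lemma bind_integral_real (κ : Y → Measure X) (hκ : Measurable κ)
    (hκp : ∀ y, IsProbabilityMeasure (κ y)) (m : Measure Y) [IsProbabilityMeasure m]
    [IsProbabilityMeasure (m.bind κ)] (f : C(X, ℝ)) (g : C(Y, ℝ))
    (hfg : ∀ y, ∫ x, f x ∂(κ y) = g y) :
    ∫ x, f x ∂(m.bind κ) = ∫ y, g y ∂m := by
  set c : ℝ := ‖f‖ with hc
  have hf_nn : ∀ x, 0 ≤ f x + c := by
    intro x
    have h2 : |f x| ≤ c := by
      calc |f x| = ‖f x‖ := (Real.norm_eq_abs _).symm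
        _ ≤ c := f.norm_coe_le_norm x
    linarith [(abs_le.mp h2).1]
  have hadd : ∀ (w : Measure X), IsProbabilityMeasure w →
      ∫ x, (f x + c) ∂w = (∫ x, f x ∂w) + c := by
    intro w hw
    rw [integral_add (cont_integrable f.continuous w) (integrable_const c), integral_const,
      probReal_univ]
    simp
  have hgadd : ∀ (w : Measure Y), IsProbabilityMeasure w →
      ∫ y, (g y + c) ∂w = (∫ y, g y ∂w) + c := by
    intro w hw
    rw [integral_add (cont_integrable g.continuous w) (integrable_const c), integral_const,
      probReal_univ]
    simp
  have hg_nn : ∀ y, 0 ≤ g y + c := by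
    intro y
    rw [← hfg y, ← hadd (κ y) (hκp y)]
    exact integral_nonneg hf_nn
  have hinner : ∀ y, ∫⁻ x, ENNReal.ofReal (f x + c) ∂(κ y) = ENNReal.ofReal (g y + c) := by
    intro y
    rw [← ofReal_integral_eq_lintegral_ofReal
      (cont_integrable (h := fun x => f x + c) (f.continuous.add continuous_const) (κ y))
      (Filter.Eventually.of_forall hf_nn), hadd (κ y) (hκp y), hfg y]
  have hmain : ENNReal.ofReal (∫ x, (f x + c) ∂(m.bind κ)) =
      ENNReal.ofReal (∫ y, (g y + c) ∂m) := by
    rw [ofReal_integral_eq_lintegral_ofReal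
      (cont_integrable (h := fun x => f x + c) (f.continuous.add continuous_const) (m.bind κ))
      (Filter.Eventually.of_forall hf_nn)]
    rw [Measure.lintegral_bind (f := fun x => ENNReal.ofReal (f x + c)) hκ.aemeasurable
      (ENNReal.measurable_ofReal.comp (f.continuous.add continuous_const).measurable).aemeasurable]
    simp_rw [hinner]
    rw [← ofReal_integral_eq_lintegral_ofReal
      (cont_integrable (h := fun y => g y + c) (g.continuous.add continuous_const) m)
      (Filter.Eventually.of_forall hg_nn)]
  have h2 : ∫ x, (f x + c) ∂(m.bind κ) = ∫ y, (g y + c) ∂m := by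
    have h3 : (0:ℝ) ≤ ∫ x, (f x + c) ∂(m.bind κ) := integral_nonneg hf_nn
    have h4 : (0:ℝ) ≤ ∫ y, (g y + c) ∂m := integral_nonneg hg_nn
    exact (ENNReal.ofReal_eq_ofReal_iff h3 h4).mp hmain
  have h5 := hadd (m.bind κ) ‹_›
  have h6 := hgadd m ‹_›
  rw [h5, h6] at h2
  linarith

lemma bind_integral_complex (κ : Y → Measure X) (hκ : Measurable κ)
    (hκp : ∀ y, IsProbabilityMeasure (κ y)) (m : Measure Y) [IsProbabilityMeasure m]
    [IsProbabilityMeasure (m.bind κ)] (f : C(X, ℂ)) (g : C(Y, ℂ))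
    (hfg : ∀ y, ∫ x, f x ∂(κ y) = g y) :
    ∫ x, f x ∂(m.bind κ) = ∫ y, g y ∂m := by
  set fre : C(X, ℝ) := ⟨fun x => (f x).re, Complex.continuous_re.comp f.continuous⟩
  set fim : C(X, ℝ) := ⟨fun x => (f x).im, Complex.continuous_im.comp f.continuous⟩
  set gre : C(Y, ℝ) := ⟨fun y => (g y).re, Complex.continuous_re.comp g.continuous⟩
  set gim : C(Y, ℝ) := ⟨fun y => (g y).im, Complex.continuous_im.comp g.continuous⟩
  have hre : ∀ y, ∫ x, fre x ∂(κ y) = gre y := by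
    intro y
    have := integral_re (cont_integrable f.continuous (κ y))
    rw [hfg y] at this
    exact this
  have him : ∀ y, ∫ x, fim x ∂(κ y) = gim y := by
    intro y
    have := integral_im (cont_integrable f.continuous (κ y))
    rw [hfg y] at this
    exact this
  have h1 := bind_integral_real κ hκ hκp m fre gre hre
  have h2 := bind_integral_real κ hκ hκp m fim gim him
  apply Complex.ext
  · exact ((integral_re (cont_integrable f.continuous (m.bind κ))).symm.trans h1).trans
      (integral_re (cont_integrable g.continuous m))
  · exact ((integral_im (cont_integrable f.continuous (m.bind κ))).symm.trans h2).trans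
      (integral_im (cont_integrable g.continuous m))

end Step


/-- Let `k ≥ 1` and let `B 0, …, B k` together with compact abelian groups
`A 1, …, A k` form a `k`-fold compact abelian bundle with arbitrary compact base `B 0`.  Then for
every `x ∈ B 0` there is a unique regular Borel probability measure `μ x` on `B k`, concentrated
on the fibre `π₀⁻¹(x)`, whose pushforward to each `B i` is invariant under the action of `A i`;
moreover the family `{μ x : x ∈ B 0}` is a continuous system of measures on `π₀ : B k → B 0`. -/
theorem stmt4 (k : ℕ) (hk : 1 ≤ k)
    (B : Fin (k+1) → Type*)
    [∀ i, TopologicalSpace (B i)] [∀ i, CompactSpace (B i)] [∀ i, T2Space (B i)]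
    [∀ i, SecondCountableTopology (B i)] [∀ i, MeasurableSpace (B i)] [∀ i, BorelSpace (B i)]
    (A : Fin k → Type*)
    [∀ i, AddCommGroup (A i)] [∀ i, TopologicalSpace (A i)] [∀ i, IsTopologicalAddGroup (A i)]
    [∀ i, CompactSpace (A i)] [∀ i, T2Space (A i)] [∀ i, SecondCountableTopology (A i)]
    (act : ∀ i : Fin k, A i → B i.succ → B i.succ)
    (act_zero : ∀ i x, act i 0 x = x)
    (act_add : ∀ i a b x, act i (a + b) x = act i a (act i b x))
    (act_cont : ∀ i, Continuous fun p : A i × B i.succ => act i p.1 p.2)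
    (act_free : ∀ i a x, act i a x = x → a = 0)
    (proj : ∀ i j : Fin (k+1), i ≤ j → B j → B i)
    (proj_self : ∀ i (h : i ≤ i) x, proj i i h x = x)
    (proj_comp : ∀ i j l (hij : i ≤ j) (hjl : j ≤ l) (x : B l),
      proj i l (le_trans hij hjl) x = proj i j hij (proj j l hjl x))
    (proj_cont : ∀ i j (h : i ≤ j), Continuous (proj i j h))
    (proj_quot : ∀ i : Fin k,
      Topology.IsQuotientMap (proj i.castSucc i.succ (Fin.castSucc_lt_succ (i := i)).le))
    (proj_fib : ∀ (i : Fin k) (x y : B i.succ),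
      proj i.castSucc i.succ (Fin.castSucc_lt_succ (i := i)).le x
        = proj i.castSucc i.succ (Fin.castSucc_lt_succ (i := i)).le y ↔ ∃ a : A i, act i a y = x) :
    ∃ μ : B 0 → Measure (B (Fin.last k)),
      (∀ x : B 0,
        IsProbabilityMeasure (μ x) ∧ (μ x).Regular ∧
        μ x ((proj 0 (Fin.last k) (Fin.zero_le _) ⁻¹' ({x} : Set (B 0)))ᶜ) = 0 ∧
        ∀ (i : Fin k) (a : A i),
          Measure.map (act i a) (Measure.map (proj i.succ (Fin.last k) (Fin.le_last _)) (μ x))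
            = Measure.map (proj i.succ (Fin.last k) (Fin.le_last _)) (μ x)) ∧
      (∀ (x : B 0) (ν : Measure (B (Fin.last k))),
        (IsProbabilityMeasure ν ∧ ν.Regular ∧
          ν ((proj 0 (Fin.last k) (Fin.zero_le _) ⁻¹' ({x} : Set (B 0)))ᶜ) = 0 ∧
          ∀ (i : Fin k) (a : A i),
            Measure.map (act i a) (Measure.map (proj i.succ (Fin.last k) (Fin.le_last _)) ν)
              = Measure.map (proj i.succ (Fin.last k) (Fin.le_last _)) ν) → ν = μ x) ∧
      (∀ f : C(B (Fin.last k), ℂ), Continuous fun x : B 0 => ∫ b, f b ∂(μ x)) := by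
  classical
  letI mA : ∀ i, MeasurableSpace (A i) := fun i => borel (A i)
  haveI bA : ∀ i, BorelSpace (A i) := fun i => ⟨rfl⟩
  have hactc : ∀ (i : Fin k) (a : A i), Continuous (act i a) := fun i a =>
    (act_cont i).comp (continuous_const.prodMk continuous_id)
  -- step kernels
  choose κ hκmeas hκprob hκfib hκinv hκint using fun i : Fin k =>
    step_exists (act i) (act_add i) (act_cont i)
      (proj i.castSucc i.succ (Fin.castSucc_lt_succ (i := i)).le) (proj_quot i) (proj_fib i)
  -- the tower of measures
  let M : ∀ i : Fin (k+1), B 0 → Measure (B i) :=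
    Fin.induction (fun x => Measure.dirac x) (fun i ih x => (ih x).bind (κ i))
  have hM0 : ∀ x, M 0 x = Measure.dirac x := fun _ => rfl
  have hMs : ∀ (i : Fin k) (x : B 0), M i.succ x = (M i.castSucc x).bind (κ i) :=
    fun i x => rfl
  -- probability
  have P1 : ∀ (i : Fin (k+1)) (x : B 0), IsProbabilityMeasure (M i x) := by
    intro i
    induction i using Fin.induction with
    | zero => intro x; rw [hM0]; infer_instance
    | succ i ih =>
        intro x
        haveI := ih x
        constructor
        rw [hMs, Measure.bind_apply MeasurableSet.univ (hκmeas i).aemeasurable]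
        have : ∀ y, κ i y Set.univ = 1 := fun y => (hκprob i y).measure_univ
        simp [this, measure_univ]
  -- single-step pushforward
  have P2 : ∀ (i : Fin k) (x : B 0),
      (M i.succ x).map (proj i.castSucc i.succ (Fin.castSucc_lt_succ (i := i)).le) = M i.castSucc x := by
    intro i x
    ext s hs
    rw [Measure.map_apply (proj_cont _ _ _).measurable hs, hMs,
      Measure.bind_apply (hs.preimage (proj_cont _ _ _).measurable) (hκmeas i).aemeasurable]
    have h1 : ∀ y, κ i y (proj i.castSucc i.succ (Fin.castSucc_lt_succ (i := i)).le ⁻¹' s)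
        = s.indicator 1 y := fun y => hκfib i y s hs
    rw [lintegral_congr h1]
    simp [lintegral_indicator_one hs]
  -- pushforwards along the tower
  have P2' : ∀ (i j : Fin (k+1)) (h : j ≤ i) (x : B 0),
      (M i x).map (proj j i h) = M j x := by
    intro i
    induction i using Fin.induction with
    | zero =>
        intro j h x
        have hj : j = 0 := Fin.le_zero_iff.mp h
        subst hj
        have hid : proj 0 0 h = id := funext fun b => proj_self 0 h b
        rw [hid, Measure.map_id]
    | succ i ih =>
        intro j h x
        by_cases hj : j = i.succ
        · subst hj
          have hid : proj i.succ i.succ h = id := funext fun b => proj_self i.succ h b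
          rw [hid, Measure.map_id]
        · have h' : j ≤ i.castSucc := by
            have h1 : j.val ≤ i.val + 1 := h
            have h2 : j.val ≠ i.val + 1 := fun hc => hj (Fin.ext hc)
            exact Fin.mk_le_mk.mpr (by omega)
          have hcomp : proj j i.succ h
              = (proj j i.castSucc h') ∘ (proj i.castSucc i.succ (Fin.castSucc_lt_succ (i := i)).le) :=
            funext fun b => proj_comp j i.castSucc i.succ h' (Fin.castSucc_lt_succ (i := i)).le b
          rw [hcomp, ← Measure.map_map (proj_cont _ _ _).measurable (proj_cont _ _ _).measurable,
            P2 i x, ih j h' x]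
  -- concentration
  have P3 : ∀ (i : Fin (k+1)) (x : B 0) (h : (0 : Fin (k+1)) ≤ i),
      M i x ((proj 0 i h ⁻¹' ({x} : Set (B 0)))ᶜ) = 0 := by
    intro i x h
    have hpre : (proj 0 i h ⁻¹' ({x} : Set (B 0)))ᶜ = proj 0 i h ⁻¹' ({x}ᶜ) := by
      rw [Set.preimage_compl]
    rw [hpre, ← Measure.map_apply (proj_cont _ _ _).measurable
      (MeasurableSet.singleton x).compl, P2' i 0 h x, hM0,
      Measure.dirac_apply' x (MeasurableSet.singleton x).compl]
    simp
  -- invariance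
  have P4 : ∀ (i : Fin k) (a : A i) (x : B 0),
      (M i.succ x).map (act i a) = M i.succ x := by
    intro i a x
    ext s hs
    rw [Measure.map_apply (hactc i a).measurable hs, hMs,
      Measure.bind_apply (hs.preimage (hactc i a).measurable) (hκmeas i).aemeasurable,
      Measure.bind_apply hs (hκmeas i).aemeasurable]
    apply lintegral_congr
    intro y
    rw [← Measure.map_apply (hactc i a).measurable hs, hκinv i a y]
  -- continuity
  have P5 : ∀ (i : Fin (k+1)) (f : C(B i, ℂ)), Continuous fun x => ∫ b, f b ∂(M i x) := by
    intro i
    induction i using Fin.induction with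
    | zero =>
        intro f
        have : (fun x => ∫ b, f b ∂(M 0 x)) = fun x => f x := by
          funext x
          rw [hM0]
          exact integral_dirac _ x
        rw [this]
        exact f.continuous
    | succ i ih =>
        intro f
        obtain ⟨g, hg⟩ := hκint i f
        have : (fun x => ∫ b, f b ∂(M i.succ x)) = fun x => ∫ y, g y ∂(M i.castSucc x) := by
          funext x
          haveI := P1 i.castSucc x
          haveI : IsProbabilityMeasure ((M i.castSucc x).bind (κ i)) := hMs i x ▸ P1 i.succ x
          rw [hMs]
          exact bind_integral_complex (κ i) (hκmeas i) (hκprob i) (M i.castSucc x) f g hg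
        rw [this]
        exact ih g
  -- a probability measure vanishing outside {x} is dirac
  have dirac_unique : ∀ (x : B 0) (m : Measure (B 0)), IsProbabilityMeasure m →
      m ({x}ᶜ) = 0 → m = Measure.dirac x := by
    intro x m hm h0
    ext s hs
    by_cases hx : x ∈ s
    · have hsc : m sᶜ = 0 :=
        measure_mono_null (Set.compl_subset_compl.mpr (Set.singleton_subset_iff.mpr hx)) h0
      have h1 : m s = 1 := by
        have := measure_compl hs (measure_ne_top m s)
        rw [hsc, measure_univ] at this
        have h2 := tsub_eq_zero_iff_le.mp this.symm
        exact le_antisymm prob_le_one h2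
      rw [h1, Measure.dirac_apply' x hs, Set.indicator_of_mem hx]
      rfl
    · have h1 : m s = 0 := by
        apply measure_mono_null _ h0
        intro z hz
        simp only [Set.mem_compl_iff, Set.mem_singleton_iff]
        intro hzx
        exact hx (hzx ▸ hz)
      rw [h1, Measure.dirac_apply' x hs, Set.indicator_of_notMem hx]
  refine ⟨M (Fin.last k), fun x => ?_, fun x ν hν => ?_, P5 (Fin.last k)⟩
  · haveI := P1 (Fin.last k) x
    refine ⟨P1 (Fin.last k) x, inferInstance, P3 (Fin.last k) x (Fin.zero_le _), ?_⟩
    intro i a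
    rw [P2' (Fin.last k) i.succ (Fin.le_last _) x, P4 i a x]
  · obtain ⟨hν1, hν2, hν3, hν4⟩ := hν
    have uniq : ∀ i : Fin (k+1), ν.map (proj i (Fin.last k) (Fin.le_last i)) = M i x := by
      intro i
      induction i using Fin.induction with
      | zero =>
          rw [hM0]
          apply dirac_unique
          · exact Measure.isProbabilityMeasure_map (proj_cont _ _ _).measurable.aemeasurable
          · rw [Measure.map_apply (proj_cont _ _ _).measurable
              (MeasurableSet.singleton x).compl, Set.preimage_compl]
            exact hν3
      | succ i ih =>
          haveI : IsProbabilityMeasure (ν.map (proj i.succ (Fin.last k) (Fin.le_last i.succ))) :=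
            Measure.isProbabilityMeasure_map (proj_cont _ _ _).measurable.aemeasurable
          haveI := P1 i.succ x
          apply step_unique (act i) (act_add i) (act_cont i)
            (proj i.castSucc i.succ (Fin.castSucc_lt_succ (i := i)).le) (proj_quot i) (proj_fib i)
          · -- equal pushforwards
            have hcomp : (proj i.castSucc i.succ (Fin.castSucc_lt_succ (i := i)).le) ∘
                (proj i.succ (Fin.last k) (Fin.le_last i.succ))
                = proj i.castSucc (Fin.last k) (Fin.le_last i.castSucc) :=
              (funext fun b => proj_comp i.castSucc i.succ (Fin.last k)
                (Fin.castSucc_lt_succ (i := i)).le (Fin.le_last i.succ) b).symm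
            rw [Measure.map_map (proj_cont _ _ _).measurable (proj_cont _ _ _).measurable,
              hcomp, ih, P2 i x]
          · exact fun a => hν4 i a
          · exact fun a => P4 i a x
    have hlast := uniq (Fin.last k)
    have hid : proj (Fin.last k) (Fin.last k) (Fin.le_last _) = id :=
      funext fun b => proj_self (Fin.last k) (Fin.le_last _) b
    rw [hid, Measure.map_id] at hlast
    exact hlast
end

section
/- Let V, W, Z be compact spaces and let {μ_w : w ∈ W} be a CSM of strictly positive Borel probability measures on a continuous map π : V → W. Then the topological space 𝓛(V,Z) is regular, Hausdorff and second-countable, and the projection π̃ : 𝓛(V,Z) → W is continuous. -/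
open MeasureTheory

/-- A representative for an element of `𝓛(V,Z)`: a base point `w : W` together with a Borel
measurable function, considered (via the measure `μ w`, concentrated on the fibre `π⁻¹(w)`) as
a function on the fibre over `w`. -/
structure LRaw (V W Z : Type*) [MeasurableSpace V] [MeasurableSpace Z] where
  base : W
  toFun : V → Z
  meas : Measurable toFun

/-- Two representatives are identified when they have the same base point and agree
`μ w`-almost everywhere. -/
def lSetoid (V W Z : Type*) [MeasurableSpace V] [MeasurableSpace Z]
    (μ : W → Measure V) : Setoid (LRaw V W Z) where
  r f g := f.base = g.base ∧ f.toFun =ᵐ[μ f.base] g.toFun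
  iseqv := by
    refine ⟨fun f => ⟨rfl, Filter.EventuallyEq.rfl⟩, ?_, ?_⟩
    · rintro f g ⟨h1, h2⟩
      refine ⟨h1.symm, ?_⟩
      rw [← h1]
      exact h2.symm
    · rintro f g h ⟨h1, h2⟩ ⟨h3, h4⟩
      refine ⟨h1.trans h3, h2.trans ?_⟩
      rw [h1]
      exact h4

/-- The space `𝓛(V,Z) = ⋃_{w ∈ W} L(π⁻¹(w), Z)`: measurable functions on the fibres, modulo
almost-everywhere equality. -/
def LSpace (V W Z : Type*) [MeasurableSpace V] [MeasurableSpace Z]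
    (μ : W → Measure V) : Type _ :=
  Quotient (lSetoid V W Z μ)

/-- The projection `π̃ : 𝓛(V,Z) → W`. -/
def LSpace.proj (V W Z : Type*) [MeasurableSpace V] [MeasurableSpace Z]
    (μ : W → Measure V) : LSpace V W Z μ → W :=
  Quotient.lift (fun f => f.base) (fun _ _ h => h.1)

/-- The test functions `φ_{F₁,F₂} : f ↦ ∫_{π⁻¹(π̃ f)} F₁(f v) F₂(v) dμ_{π̃ f}(v)` generating
the topology of `𝓛(V,Z)`. -/
noncomputable def lPhi (V W Z : Type*) [TopologicalSpace V] [MeasurableSpace V]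
    [TopologicalSpace Z] [MeasurableSpace Z] (μ : W → Measure V)
    (F₁ : C(Z, ℂ)) (F₂ : C(V, ℂ)) : LSpace V W Z μ → ℂ :=
  Quotient.lift (fun f => ∫ v, F₁ (f.toFun v) * F₂ v ∂(μ f.base))
    (by
      rintro f g ⟨h1, h2⟩
      show ∫ v, F₁ (f.toFun v) * F₂ v ∂(μ f.base) = ∫ v, F₁ (g.toFun v) * F₂ v ∂(μ g.base)
      rw [h1] at h2 ⊢
      exact integral_congr_ae (h2.mono fun v hv => by simp only []; rw [hv]))

/-- The topology of `𝓛(V,Z)`: the coarsest topology making all the functions `φ_{F₁,F₂}`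
continuous, for `F₁ : Z → ℂ` and `F₂ : V → ℂ` continuous. -/
noncomputable def lTop (V W Z : Type*) [TopologicalSpace V] [MeasurableSpace V]
    [TopologicalSpace Z] [MeasurableSpace Z] (μ : W → Measure V) :
    TopologicalSpace (LSpace V W Z μ) :=
  ⨅ (F₁ : C(Z, ℂ)) (F₂ : C(V, ℂ)),
    TopologicalSpace.induced (lPhi V W Z μ F₁ F₂) inferInstance

section Aux

variable {V W Z : Type*}
    [TopologicalSpace V] [CompactSpace V] [T2Space V] [SecondCountableTopology V]
    [MeasurableSpace V] [BorelSpace V]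
    [TopologicalSpace Z] [CompactSpace Z] [T2Space Z] [SecondCountableTopology Z]
    [MeasurableSpace Z] [BorelSpace Z]

@[simp] lemma lPhi_mk (μ : W → Measure V) (F₁ : C(Z, ℂ)) (F₂ : C(V, ℂ)) (a : LRaw V W Z) :
    lPhi V W Z μ F₁ F₂ (Quotient.mk (lSetoid V W Z μ) a)
      = ∫ v, F₁ (a.toFun v) * F₂ v ∂(μ a.base) := rfl

@[simp] lemma LSpace.proj_mk (μ : W → Measure V) (a : LRaw V W Z) :
    LSpace.proj V W Z μ (Quotient.mk (lSetoid V W Z μ) a) = a.base := rfl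

lemma integrable_aux (μ' : Measure V) [IsFiniteMeasure μ'] {f : V → Z} (hf : Measurable f)
    (F₁ : C(Z, ℂ)) (F₂ : C(V, ℂ)) : Integrable (fun v => F₁ (f v) * F₂ v) μ' := by
  have hm : AEStronglyMeasurable (fun v => F₁ (f v) * F₂ v) μ' :=
    ((F₁.continuous.measurable.comp hf).mul F₂.continuous.measurable).aestronglyMeasurable
  refine Integrable.mono' (integrable_const (‖F₁‖ * ‖F₂‖)) hm
    (Filter.Eventually.of_forall fun v => ?_)
  rw [norm_mul]
  exact mul_le_mul (F₁.norm_coe_le_norm _) (F₂.norm_coe_le_norm _) (norm_nonneg _)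
    (norm_nonneg _)

/-- A bounded measurable function whose integral against every continuous function vanishes is
a.e. zero. -/
lemma ae_eq_zero_aux (μ' : Measure V) [IsProbabilityMeasure μ'] {h : V → ℂ}
    (hm : Measurable h) (C : ℝ) (hb : ∀ v, ‖h v‖ ≤ C)
    (hz : ∀ F : C(V, ℂ), ∫ v, h v * F v ∂μ' = 0) : h =ᵐ[μ'] 0 := by
  have hm2 : MemLp (fun v => star (h v)) 2 μ' :=
    MemLp.of_bound (continuous_star.measurable.comp hm).aestronglyMeasurable C
      (Filter.Eventually.of_forall fun v => by simpa using hb v)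
  set H : Lp ℂ 2 μ' := hm2.toLp _ with hH
  have hcont : Continuous fun ψ : Lp ℂ 2 μ' => (inner ℂ H ψ : ℂ) := (innerSL ℂ H).continuous
  have hrange : Set.EqOn (fun ψ : Lp ℂ 2 μ' => (inner ℂ H ψ : ℂ)) (fun _ => (0 : ℂ))
      (Set.range (ContinuousMap.toLp (E := ℂ) 2 μ' ℂ)) := by
    rintro _ ⟨F, rfl⟩
    show (inner ℂ H (ContinuousMap.toLp (E := ℂ) 2 μ' ℂ F) : ℂ) = 0
    rw [MeasureTheory.L2.inner_def]
    have hcongr : ∫ v, (inner ℂ (H v) ((ContinuousMap.toLp (E := ℂ) 2 μ' ℂ F) v) : ℂ) ∂μ'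
        = ∫ v, h v * F v ∂μ' := by
      apply integral_congr_ae
      filter_upwards [hm2.coeFn_toLp, ContinuousMap.coeFn_toLp (p := 2) (μ := μ') (𝕜 := ℂ) F]
        with v hv1 hv2
      rw [hv1, hv2, RCLike.inner_apply]
      simp [mul_comm]
    rw [hcongr, hz F]
  have hd : Dense (Set.range (ContinuousMap.toLp (E := ℂ) 2 μ' ℂ)) :=
    ContinuousMap.toLp_denseRange (E := ℂ) (𝕜 := ℂ) μ' (by norm_num)
  have hall := Continuous.ext_on hd hcont continuous_const hrange
  have hH0 : H = 0 := inner_self_eq_zero.mp (congrFun hall H)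
  have hstar : (fun v => star (h v)) =ᵐ[μ'] 0 := by
    have h1 := hm2.coeFn_toLp
    rw [← hH, hH0] at h1
    exact (h1.symm.trans (MeasureTheory.Lp.coeFn_zero ℂ 2 μ'))
  filter_upwards [hstar] with v hv
  simp only [Pi.zero_apply] at hv ⊢
  exact star_eq_zero.mp hv

lemma integral_comp_eq {α β : Type*} [MeasurableSpace α] (μ' : Measure α)
    [IsProbabilityMeasure μ'] (π : α → β) (w : β) (hconc : μ' ((π ⁻¹' {w})ᶜ) = 0)
    (h : β → ℂ) : ∫ v, h (π v) ∂μ' = h w := by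
  have hae : (fun v => h (π v)) =ᵐ[μ'] fun _ => h w := by
    have hmem : π ⁻¹' {w} ∈ MeasureTheory.ae μ' := by
      rw [MeasureTheory.mem_ae_iff]; exact hconc
    filter_upwards [hmem] with v hv
    simp only [Set.mem_preimage, Set.mem_singleton_iff] at hv
    rw [hv]
  rw [integral_congr_ae hae, integral_const]
  simp

lemma lPhi_dist_le (μ : W → Measure V) (hprob : ∀ w, IsProbabilityMeasure (μ w))
    (F₁ G₁ : C(Z, ℂ)) (F₂ G₂ : C(V, ℂ)) (x : LSpace V W Z μ) :
    dist (lPhi V W Z μ F₁ F₂ x) (lPhi V W Z μ G₁ G₂ x)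
      ≤ dist F₁ G₁ * ‖F₂‖ + ‖G₁‖ * dist F₂ G₂ := by
  obtain ⟨a, rfl⟩ := Quotient.exists_rep x
  haveI := hprob a.base
  rw [lPhi_mk, lPhi_mk, dist_eq_norm,
    ← integral_sub (integrable_aux _ a.meas F₁ F₂) (integrable_aux _ a.meas G₁ G₂)]
  have hb : ∀ v, ‖F₁ (a.toFun v) * F₂ v - G₁ (a.toFun v) * G₂ v‖
      ≤ dist F₁ G₁ * ‖F₂‖ + ‖G₁‖ * dist F₂ G₂ := by
    intro v
    calc ‖F₁ (a.toFun v) * F₂ v - G₁ (a.toFun v) * G₂ v‖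
        = ‖(F₁ (a.toFun v) - G₁ (a.toFun v)) * F₂ v + G₁ (a.toFun v) * (F₂ v - G₂ v)‖ := by
          ring_nf
      _ ≤ ‖(F₁ (a.toFun v) - G₁ (a.toFun v)) * F₂ v‖ + ‖G₁ (a.toFun v) * (F₂ v - G₂ v)‖ :=
          norm_add_le _ _
      _ = ‖F₁ (a.toFun v) - G₁ (a.toFun v)‖ * ‖F₂ v‖ + ‖G₁ (a.toFun v)‖ * ‖F₂ v - G₂ v‖ := by
          rw [norm_mul, norm_mul]
      _ ≤ dist F₁ G₁ * ‖F₂‖ + ‖G₁‖ * dist F₂ G₂ := by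
          gcongr
          · rw [← dist_eq_norm]; exact ContinuousMap.dist_apply_le_dist _
          · exact F₂.norm_coe_le_norm v
          · exact G₁.norm_coe_le_norm _
          · rw [← dist_eq_norm]; exact ContinuousMap.dist_apply_le_dist v
  have := norm_integral_le_of_norm_le_const (μ := μ a.base)
    (C := dist F₁ G₁ * ‖F₂‖ + ‖G₁‖ * dist F₂ G₂) (Filter.Eventually.of_forall hb)
  simpa using this

lemma lTop_eq (μ : W → Measure V) (hprob : ∀ w, IsProbabilityMeasure (μ w))
    (D₁ : Set C(Z, ℂ)) (hD₁ : Dense D₁) (D₂ : Set C(V, ℂ)) (hD₂ : Dense D₂) :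
    lTop V W Z μ = TopologicalSpace.induced
      (fun (x : LSpace V W Z μ) (p : ↥D₁ × ↥D₂) => lPhi V W Z μ p.1.1 p.2.1 x)
      Pi.topologicalSpace := by
  rw [induced_to_pi]
  unfold lTop
  refine le_antisymm (le_iInf fun p => ?_) (le_iInf fun F₁ => le_iInf fun F₂ => ?_)
  · exact iInf_le_of_le p.1.1 (iInf_le _ p.2.1)
  · letI τ₀ : TopologicalSpace (LSpace V W Z μ) :=
      ⨅ p : ↥D₁ × ↥D₂,
        TopologicalSpace.induced (fun x => lPhi V W Z μ p.1.1 p.2.1 x) inferInstance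
    show τ₀ ≤ _
    rw [← continuous_iff_le_induced]
    have hbase : ∀ p : ↥D₁ × ↥D₂, Continuous (lPhi V W Z μ p.1.1 p.2.1) := fun p =>
      continuous_iff_le_induced.mpr (iInf_le _ p)
    have hch1 : ∀ n : ℕ, ∃ G ∈ D₁, dist F₁ G < 1 / (n + 1) := fun n =>
      Metric.mem_closure_iff.mp (hD₁ F₁) _ (by positivity)
    have hch2 : ∀ n : ℕ, ∃ G ∈ D₂, dist F₂ G < 1 / (n + 1) := fun n =>
      Metric.mem_closure_iff.mp (hD₂ F₂) _ (by positivity)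
    choose G₁ hG₁mem hG₁ using hch1
    choose G₂ hG₂mem hG₂ using hch2
    have key : TendstoUniformly (fun n x => lPhi V W Z μ (G₁ n) (G₂ n) x)
        (lPhi V W Z μ F₁ F₂) Filter.atTop := by
      rw [Metric.tendstoUniformly_iff]
      intro ε hε
      have h0 : Filter.Tendsto (fun n : ℕ => 1 / ((n : ℝ) + 1)) Filter.atTop (nhds 0) :=
        tendsto_one_div_add_atTop_nhds_zero_nat
      have hb : Filter.Tendsto
          (fun n : ℕ => 1 / ((n : ℝ) + 1) * ‖F₂‖ + (‖F₁‖ + 1) * (1 / ((n : ℝ) + 1)))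
          Filter.atTop (nhds 0) := by
        have := (h0.mul_const ‖F₂‖).add (h0.const_mul (‖F₁‖ + 1))
        simpa [mul_comm] using this
      filter_upwards [hb.eventually (gt_mem_nhds hε)] with n hn x
      have hnorm : ‖G₁ n‖ ≤ ‖F₁‖ + 1 := by
        have htri := dist_triangle (G₁ n) F₁ 0
        rw [dist_zero_right, dist_zero_right] at htri
        have h2 : dist (G₁ n) F₁ ≤ 1 := by
          rw [dist_comm]
          refine le_trans (hG₁ n).le ?_
          rw [div_le_one (by positivity)]
          have : (0 : ℝ) ≤ (n : ℝ) := Nat.cast_nonneg n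
          linarith
        linarith
      calc dist (lPhi V W Z μ F₁ F₂ x) (lPhi V W Z μ (G₁ n) (G₂ n) x)
          ≤ dist F₁ (G₁ n) * ‖F₂‖ + ‖G₁ n‖ * dist F₂ (G₂ n) :=
            lPhi_dist_le μ hprob _ _ _ _ x
        _ ≤ 1 / ((n : ℝ) + 1) * ‖F₂‖ + (‖F₁‖ + 1) * (1 / ((n : ℝ) + 1)) := by
            gcongr
            · exact (hG₁ n).le
            · exact (hG₂ n).le
        _ < ε := hn
    exact key.continuous
      (Filter.Eventually.of_forall fun n => hbase ⟨⟨G₁ n, hG₁mem n⟩, ⟨G₂ n, hG₂mem n⟩⟩).frequently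

lemma lPhi_injective {W : Type*} [TopologicalSpace W] [CompactSpace W] [T2Space W]
    (π : V → W) (hπ : Continuous π) (μ : W → Measure V)
    (hprob : ∀ w, IsProbabilityMeasure (μ w))
    (hconc : ∀ w : W, μ w ((π ⁻¹' ({w} : Set W))ᶜ) = 0)
    (D₁ : Set C(Z, ℂ)) (hD₁ : Dense D₁) (h1D₁ : (1 : C(Z, ℂ)) ∈ D₁) (hD₁c : D₁.Countable)
    (D₂ : Set C(V, ℂ)) (hD₂ : Dense D₂) :
    Function.Injective
      (fun (x : LSpace V W Z μ) (p : ↥D₁ × ↥D₂) => lPhi V W Z μ p.1.1 p.2.1 x) := by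
  intro x y hxy
  obtain ⟨a, rfl⟩ := Quotient.exists_rep x
  obtain ⟨b, rfl⟩ := Quotient.exists_rep y
  haveI := hprob
  have hpt : ∀ G₁ ∈ D₁, ∀ F₂ : C(V, ℂ),
      lPhi V W Z μ G₁ F₂ (Quotient.mk (lSetoid V W Z μ) a)
        = lPhi V W Z μ G₁ F₂ (Quotient.mk (lSetoid V W Z μ) b) := by
    intro G₁ hG₁ F₂
    have hLa : LipschitzWith ‖G₁‖₊
        (fun F : C(V, ℂ) => lPhi V W Z μ G₁ F (Quotient.mk (lSetoid V W Z μ) a)) := by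
      apply LipschitzWith.of_dist_le_mul
      intro X Y
      have := lPhi_dist_le μ hprob G₁ G₁ X Y (Quotient.mk (lSetoid V W Z μ) a)
      simpa using this
    have hLb : LipschitzWith ‖G₁‖₊
        (fun F : C(V, ℂ) => lPhi V W Z μ G₁ F (Quotient.mk (lSetoid V W Z μ) b)) := by
      apply LipschitzWith.of_dist_le_mul
      intro X Y
      have := lPhi_dist_le μ hprob G₁ G₁ X Y (Quotient.mk (lSetoid V W Z μ) b)
      simpa using this
    have heq := Continuous.ext_on hD₂ hLa.continuous hLb.continuous
      (fun G₂ hG₂ => congrFun hxy ⟨⟨G₁, hG₁⟩, ⟨G₂, hG₂⟩⟩)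
    exact congrFun heq F₂
  have hpt1 : ∀ h : C(W, ℝ), h a.base = h b.base := by
    intro h
    have hthis := hpt 1 h1D₁
      ⟨fun v => ((h (π v) : ℝ) : ℂ), Complex.continuous_ofReal.comp (h.continuous.comp hπ)⟩
    simp only [lPhi_mk, ContinuousMap.coe_mk, ContinuousMap.coe_one, Pi.one_apply,
      one_mul] at hthis
    have e1 : ∫ v, ((h (π v) : ℝ) : ℂ) ∂(μ a.base) = ((h a.base : ℝ) : ℂ) :=
      integral_comp_eq (μ a.base) π a.base (hconc a.base) (fun w => ((h w : ℝ) : ℂ))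
    have e2 : ∫ v, ((h (π v) : ℝ) : ℂ) ∂(μ b.base) = ((h b.base : ℝ) : ℂ) :=
      integral_comp_eq (μ b.base) π b.base (hconc b.base) (fun w => ((h w : ℝ) : ℂ))
    rw [e1, e2] at hthis
    exact_mod_cast hthis
  have hbase : a.base = b.base := by
    by_contra hne
    obtain ⟨h, h0, h1, -⟩ := exists_continuous_zero_one_of_isClosed
      (isClosed_singleton (x := a.base)) (isClosed_singleton (x := b.base))
      (Set.disjoint_singleton.mpr hne)
    have := hpt1 h
    rw [h0 rfl, h1 rfl] at this
    simpa using this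
  refine Quotient.sound ⟨hbase, ?_⟩
  have hae : ∀ G₁ ∈ D₁, (fun v => G₁ (a.toFun v)) =ᵐ[μ a.base] (fun v => G₁ (b.toFun v)) := by
    intro G₁ hG₁
    have hz : ∀ F : C(V, ℂ),
        ∫ v, (G₁ (a.toFun v) - G₁ (b.toFun v)) * F v ∂(μ a.base) = 0 := by
      intro F
      have h' := hpt G₁ hG₁ F
      simp only [lPhi_mk] at h'
      rw [← hbase] at h'
      simp_rw [sub_mul]
      rw [integral_sub (integrable_aux _ a.meas G₁ F) (integrable_aux _ b.meas G₁ F),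
        sub_eq_zero]
      exact h'
    have hmz : Measurable fun v => G₁ (a.toFun v) - G₁ (b.toFun v) :=
      (G₁.continuous.measurable.comp a.meas).sub (G₁.continuous.measurable.comp b.meas)
    have hbz : ∀ v, ‖G₁ (a.toFun v) - G₁ (b.toFun v)‖ ≤ ‖G₁‖ + ‖G₁‖ := fun v =>
      le_trans (norm_sub_le _ _) (add_le_add (G₁.norm_coe_le_norm _) (G₁.norm_coe_le_norm _))
    have := ae_eq_zero_aux (μ a.base) hmz (‖G₁‖ + ‖G₁‖) hbz hz
    filter_upwards [this] with v hv
    simp only [Pi.zero_apply] at hv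
    exact sub_eq_zero.mp hv
  have hcomb : ∀ᵐ v ∂(μ a.base), ∀ G₁ ∈ D₁, G₁ (a.toFun v) = G₁ (b.toFun v) :=
    (MeasureTheory.ae_ball_iff hD₁c).mpr hae
  filter_upwards [hcomb] with v hv
  by_contra hne
  obtain ⟨F, F0, F1, -⟩ := exists_continuous_zero_one_of_isClosed
    (isClosed_singleton (x := a.toFun v)) (isClosed_singleton (x := b.toFun v))
    (Set.disjoint_singleton.mpr hne)
  set Fc : C(Z, ℂ) := ⟨fun z => ((F z : ℝ) : ℂ), Complex.continuous_ofReal.comp F.continuous⟩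
    with hFc
  obtain ⟨G, hGmem, hGd⟩ := Metric.mem_closure_iff.mp (hD₁ Fc) (1 / 3) (by norm_num)
  have h1 : dist (Fc (a.toFun v)) (Fc (b.toFun v)) = 1 := by
    simp [hFc, F0 rfl, F1 rfl]
  have h2 : dist (Fc (a.toFun v)) (G (a.toFun v)) ≤ dist Fc G :=
    ContinuousMap.dist_apply_le_dist _
  have h3 : dist (G (b.toFun v)) (Fc (b.toFun v)) ≤ dist Fc G := by
    rw [dist_comm]; exact ContinuousMap.dist_apply_le_dist _
  have h4 : dist (G (a.toFun v)) (G (b.toFun v)) = 0 := by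
    rw [hv G hGmem, dist_self]
  have htri := dist_triangle4 (Fc (a.toFun v)) (G (a.toFun v)) (G (b.toFun v)) (Fc (b.toFun v))
  rw [h1, h4] at htri
  linarith

end Aux

/-- Let `V, W, Z` be compact (Hausdorff, second-countable) spaces and let
`{μ w : w ∈ W}` be a continuous system of strictly positive Borel probability measures on a
continuous map `π : V → W` (each `μ w` concentrated on the fibre `π⁻¹(w)`, positive on open sets
meeting the fibre, with `w ↦ ∫ f dμ_w` continuous for each continuous `f : V → ℂ`).  Then the
topological space `𝓛(V,Z)` is regular, Hausdorff and second-countable, and the projection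
`π̃ : 𝓛(V,Z) → W` is continuous. -/
theorem stmt5
    {V W Z : Type*}
    [TopologicalSpace V] [CompactSpace V] [T2Space V] [SecondCountableTopology V]
    [MeasurableSpace V] [BorelSpace V]
    [TopologicalSpace W] [CompactSpace W] [T2Space W] [SecondCountableTopology W]
    [MeasurableSpace W] [BorelSpace W]
    [TopologicalSpace Z] [CompactSpace Z] [T2Space Z] [SecondCountableTopology Z]
    [MeasurableSpace Z] [BorelSpace Z]
    (π : V → W) (hπ : Continuous π)
    (μ : W → Measure V)
    (hprob : ∀ w : W, IsProbabilityMeasure (μ w))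
    (hconc : ∀ w : W, μ w ((π ⁻¹' ({w} : Set W))ᶜ) = 0)
    (hpos : ∀ (w : W) (U : Set V), IsOpen U → (U ∩ π ⁻¹' ({w} : Set W)).Nonempty → 0 < μ w U)
    (hcont : ∀ f : C(V, ℂ), Continuous fun w : W => ∫ v, f v ∂(μ w)) :
    @RegularSpace (LSpace V W Z μ) (lTop V W Z μ) ∧
    @T2Space (LSpace V W Z μ) (lTop V W Z μ) ∧
    @SecondCountableTopology (LSpace V W Z μ) (lTop V W Z μ) ∧
    @Continuous _ _ (lTop V W Z μ) _ (LSpace.proj V W Z μ) := by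
  classical
  haveI := hprob
  obtain ⟨D₁₀, hD₁₀c, hD₁₀d⟩ := TopologicalSpace.exists_countable_dense C(Z, ℂ)
  obtain ⟨D₂, hD₂c, hD₂d⟩ := TopologicalSpace.exists_countable_dense C(V, ℂ)
  set D₁ : Set C(Z, ℂ) := insert 1 D₁₀ with hD₁def
  have hD₁c : D₁.Countable := hD₁₀c.insert 1
  have hD₁d : Dense D₁ := hD₁₀d.mono (Set.subset_insert _ _)
  haveI : Countable ↥D₁ := hD₁c.to_subtype
  haveI : Countable ↥D₂ := hD₂c.to_subtype
  have htop := lTop_eq μ hprob D₁ hD₁d D₂ hD₂d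
  have hinj := lPhi_injective π hπ μ hprob hconc D₁ hD₁d (Set.mem_insert _ _) hD₁c D₂ hD₂d
  letI : TopologicalSpace (LSpace V W Z μ) := lTop V W Z μ
  have hemb : Topology.IsEmbedding
      (fun (x : LSpace V W Z μ) (p : ↥D₁ × ↥D₂) => lPhi V W Z μ p.1.1 p.2.1 x) :=
    ⟨⟨htop⟩, hinj⟩
  have hphi_cont : ∀ (F₁ : C(Z, ℂ)) (F₂ : C(V, ℂ)), Continuous (lPhi V W Z μ F₁ F₂) := by
    intro F₁ F₂
    rw [continuous_iff_le_induced]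
    exact iInf_le_of_le F₁ (iInf_le _ F₂)
  refine ⟨?_, hemb.t2Space, hemb.secondCountableTopology, ?_⟩
  · exact regularSpace_iInf fun F₁ => regularSpace_iInf fun F₂ => regularSpace_induced _
  · rw [continuous_def]
    intro U hU
    rw [isOpen_iff_forall_mem_open]
    intro x hx
    obtain ⟨a, rfl⟩ := Quotient.exists_rep x
    have hw : a.base ∈ U := hx
    obtain ⟨h, h0, h1, -⟩ := exists_continuous_zero_one_of_isClosed
      (isClosed_compl_iff.mpr hU) (isClosed_singleton (x := a.base))
      (Set.disjoint_singleton_right.mpr (by simpa using hw))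
    set Hc : C(V, ℂ) :=
      ⟨fun v => ((h (π v) : ℝ) : ℂ), Complex.continuous_ofReal.comp (h.continuous.comp hπ)⟩
      with hHc
    have gval : ∀ b : LRaw V W Z,
        lPhi V W Z μ 1 Hc (Quotient.mk (lSetoid V W Z μ) b) = ((h b.base : ℝ) : ℂ) := by
      intro b
      rw [lPhi_mk]
      calc ∫ v, (1 : C(Z, ℂ)) (b.toFun v) * Hc v ∂(μ b.base)
          = ∫ v, ((h (π v) : ℝ) : ℂ) ∂(μ b.base) := by simp [hHc]
        _ = ((h b.base : ℝ) : ℂ) :=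
            integral_comp_eq (μ b.base) π b.base (hconc b.base) (fun w => ((h w : ℝ) : ℂ))
    refine ⟨lPhi V W Z μ 1 Hc ⁻¹' ({0}ᶜ), ?_, ?_, ?_⟩
    · intro y hy
      obtain ⟨b, rfl⟩ := Quotient.exists_rep y
      change lPhi V W Z μ 1 Hc (Quotient.mk (lSetoid V W Z μ) b) ∈ ({0}ᶜ : Set ℂ) at hy
      simp only [Set.mem_preimage, Set.mem_compl_iff, Set.mem_singleton_iff, gval b] at hy
      have hb : h b.base ≠ 0 := by
        intro hc
        exact hy (by rw [hc]; simp)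
      have : b.base ∉ Uᶜ := fun hc => hb (h0 hc)
      show LSpace.proj V W Z μ (Quotient.mk (lSetoid V W Z μ) b) ∈ U
      simpa using not_not.mp this
    · exact (hphi_cont 1 Hc).isOpen_preimage _ (isOpen_compl_iff.mpr isClosed_singleton)
    · show lPhi V W Z μ 1 Hc (Quotient.mk (lSetoid V W Z μ) a) ∈ ({0}ᶜ : Set ℂ)
      simp only [Set.mem_preimage, Set.mem_compl_iff, Set.mem_singleton_iff, gval a]
      rw [h1 rfl]
      simp
end

section
/- Let V, W, Z be compact spaces, let {μ_w : w ∈ W} be a CSM of strictly positive Borel probability measures on a continuous map π : V → W, and let d be a metric on Z compatible with its topology. Fix w ∈ W, and let f and the terms of a sequence (f_n) all lie in L(π⁻¹(w), Z) ⊆ 𝓛(V,Z). Then f_n converges to f in the topology of 𝓛(V,Z) if and only if d₁(f_n, f) := ∫_{π⁻¹(w)} d(f_n(v), f(v)) dμ_w(v) → 0 as n → ∞. -/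
open MeasureTheory

section Aux

open Filter Topology

/-- A bounded a.e.-strongly-measurable function is integrable w.r.t. a finite measure. -/
lemma aux_integrable_of_bdd {α E : Type*} [MeasurableSpace α] [NormedAddCommGroup E]
    {μ : Measure α} [IsFiniteMeasure μ] {h : α → E} (hm : AEStronglyMeasurable h μ)
    {C : ℝ} (hb : ∀ v, ‖h v‖ ≤ C) : Integrable h μ :=
  ⟨hm, HasFiniteIntegral.of_bounded (ae_of_all _ hb)⟩

/-- Convergence of the test integrals `∫ F₁∘(fn n) · F₂` for real `F₁` and arbitrary bounded
measurable real weights, deduced from convergence for continuous weights. -/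
lemma aux_key {V Z : Type*}
    [TopologicalSpace V] [CompactSpace V] [T2Space V] [SecondCountableTopology V]
    [MeasurableSpace V] [BorelSpace V]
    [MetricSpace Z] [CompactSpace Z] [SecondCountableTopology Z]
    [MeasurableSpace Z] [BorelSpace Z]
    (μ : Measure V) [IsProbabilityMeasure μ]
    (fn : ℕ → V → Z) (hfn : ∀ n, Measurable (fn n))
    (f : V → Z) (hf : Measurable f)
    (H : ∀ (F₁ : C(Z, ℂ)) (F₂ : C(V, ℂ)),
      Tendsto (fun n => ∫ v, F₁ (fn n v) * F₂ v ∂μ) atTop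
        (𝓝 (∫ v, F₁ (f v) * F₂ v ∂μ)))
    (g : C(Z, ℝ)) (φ : V → ℝ) (C : ℝ) (hφm : Measurable φ) (hφb : ∀ v, ‖φ v‖ ≤ C) :
    Tendsto (fun n => ∫ v, g (fn n v) * φ v ∂μ) atTop (𝓝 (∫ v, g (f v) * φ v ∂μ)) := by
  have hφint : Integrable φ μ := aux_integrable_of_bdd hφm.aestronglyMeasurable hφb
  have hint : ∀ (h : V → Z), Measurable h → ∀ (ψ : V → ℝ), Measurable ψ → ∀ (D : ℝ),
      (∀ v, ‖ψ v‖ ≤ D) → Integrable (fun v => g (h v) * ψ v) μ := by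
    intro h hm ψ hψm D hψb
    refine aux_integrable_of_bdd
      ((g.continuous.measurable.comp hm).mul hψm).aestronglyMeasurable
      (C := ‖g‖ * D) fun v => ?_
    rw [norm_mul]
    exact mul_le_mul (g.norm_coe_le_norm _) (hψb v) (norm_nonneg _) (norm_nonneg g)
  rw [Metric.tendsto_atTop]
  intro ε hε
  set ε4 : ℝ := ε / (4 * (‖g‖ + 1)) with hε4def
  have hgpos : (0:ℝ) < ‖g‖ + 1 := by positivity
  have hε4 : 0 < ε4 := by positivity
  obtain ⟨ψ, hψ, hψint⟩ := hφint.exists_boundedContinuous_integral_sub_le hε4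
  -- convergence for the continuous weight ψ
  have hcontconv : Tendsto (fun n => ∫ v, g (fn n v) * ψ v ∂μ) atTop
      (𝓝 (∫ v, g (f v) * ψ v ∂μ)) := by
    have hcast : ∀ h : V → Z,
        (∫ v, (g (h v) : ℂ) * (ψ v : ℂ) ∂μ) = ((∫ v, g (h v) * ψ v ∂μ : ℝ) : ℂ) := fun h => by
      simp only [← Complex.ofReal_mul]; exact integral_ofReal
    rw [← Filter.tendsto_ofReal_iff]
    have h0 := H ⟨fun z => (g z : ℂ), Complex.continuous_ofReal.comp g.continuous⟩
      ⟨fun v => (ψ v : ℂ), Complex.continuous_ofReal.comp ψ.continuous⟩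
    simp only [ContinuousMap.coe_mk] at h0
    simpa only [hcast] using h0
  -- the approximation bound
  have happrox : ∀ (h : V → Z), Measurable h →
      |(∫ v, g (h v) * φ v ∂μ) - ∫ v, g (h v) * ψ v ∂μ| ≤ ‖g‖ * ε4 := by
    intro h hm
    have hψb : ∀ v, ‖ψ v‖ ≤ ‖ψ‖ := fun v => BoundedContinuousFunction.norm_coe_le_norm ψ v
    rw [← integral_sub (hint h hm φ hφm C hφb)
      (hint h hm ψ ψ.continuous.measurable ‖ψ‖ hψb)]
    have h1 : |∫ v, (g (h v) * φ v - g (h v) * ψ v) ∂μ|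
        ≤ ∫ v, ‖g (h v) * φ v - g (h v) * ψ v‖ ∂μ := by
      rw [← Real.norm_eq_abs]; exact norm_integral_le_integral_norm _
    refine h1.trans ?_
    have h2 : ∀ v, ‖g (h v) * φ v - g (h v) * ψ v‖ ≤ ‖g‖ * ‖φ v - ψ v‖ := by
      intro v
      rw [← mul_sub, norm_mul]
      exact mul_le_mul_of_nonneg_right (g.norm_coe_le_norm _) (norm_nonneg _)
    calc ∫ v, ‖g (h v) * φ v - g (h v) * ψ v‖ ∂μ
        ≤ ∫ v, ‖g‖ * ‖φ v - ψ v‖ ∂μ := by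
          refine integral_mono ?_ ((hφint.sub hψint).norm.const_mul ‖g‖) h2
          exact ((hint h hm φ hφm C hφb).sub
            (hint h hm ψ ψ.continuous.measurable ‖ψ‖ hψb)).norm
      _ = ‖g‖ * ∫ v, ‖φ v - ψ v‖ ∂μ := integral_const_mul _ _
      _ ≤ ‖g‖ * ε4 := mul_le_mul_of_nonneg_left hψ (norm_nonneg g)
  have hge : ‖g‖ * ε4 ≤ ε / 4 := by
    have h1 : ‖g‖ * ε4 ≤ (‖g‖ + 1) * ε4 :=
      mul_le_mul_of_nonneg_right (by linarith [norm_nonneg g]) hε4.le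
    have h2 : (‖g‖ + 1) * ε4 = ε / 4 := by
      rw [hε4def]; field_simp
    linarith
  obtain ⟨N, hN⟩ := (Metric.tendsto_atTop.mp hcontconv) (ε / 4) (by positivity)
  refine ⟨N, fun n hn => ?_⟩
  have h1 := happrox (fn n) (hfn n)
  have h2 := happrox f hf
  have h3 := hN n hn
  rw [Real.dist_eq] at h3 ⊢
  have : |(∫ v, g (fn n v) * φ v ∂μ) - ∫ v, g (f v) * φ v ∂μ|
      ≤ |(∫ v, g (fn n v) * φ v ∂μ) - ∫ v, g (fn n v) * ψ v ∂μ|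
        + |(∫ v, g (fn n v) * ψ v ∂μ) - ∫ v, g (f v) * ψ v ∂μ|
        + |(∫ v, g (f v) * ψ v ∂μ) - ∫ v, g (f v) * φ v ∂μ| := by
    linarith [abs_sub_le (∫ v, g (fn n v) * φ v ∂μ) (∫ v, g (fn n v) * ψ v ∂μ)
        (∫ v, g (f v) * φ v ∂μ),
      abs_sub_le (∫ v, g (fn n v) * ψ v ∂μ) (∫ v, g (f v) * ψ v ∂μ)
        (∫ v, g (f v) * φ v ∂μ)]
  rw [abs_sub_comm] at h2
  linarith

/-- Under the test-integral convergence hypothesis, `g ∘ fn n → g ∘ f` in `L²` for every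
continuous `g : Z → ℝ`. -/
lemma aux_key2 {V Z : Type*}
    [TopologicalSpace V] [CompactSpace V] [T2Space V] [SecondCountableTopology V]
    [MeasurableSpace V] [BorelSpace V]
    [MetricSpace Z] [CompactSpace Z] [SecondCountableTopology Z]
    [MeasurableSpace Z] [BorelSpace Z]
    (μ : Measure V) [IsProbabilityMeasure μ]
    (fn : ℕ → V → Z) (hfn : ∀ n, Measurable (fn n))
    (f : V → Z) (hf : Measurable f)
    (H : ∀ (F₁ : C(Z, ℂ)) (F₂ : C(V, ℂ)),
      Tendsto (fun n => ∫ v, F₁ (fn n v) * F₂ v ∂μ) atTop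
        (𝓝 (∫ v, F₁ (f v) * F₂ v ∂μ)))
    (g : C(Z, ℝ)) :
    Tendsto (fun n => ∫ v, (g (fn n v) - g (f v)) ^ 2 ∂μ) atTop (𝓝 0) := by
  have hint : ∀ (h h' : V → Z), Measurable h → Measurable h' →
      Integrable (fun v => g (h v) * g (h' v)) μ := by
    intro h h' hm hm'
    refine aux_integrable_of_bdd
      ((g.continuous.measurable.comp hm).mul (g.continuous.measurable.comp hm')).aestronglyMeasurable
      (C := ‖g‖ * ‖g‖) fun v => ?_
    rw [norm_mul]
    exact mul_le_mul (g.norm_coe_le_norm _) (g.norm_coe_le_norm _) (norm_nonneg _) (norm_nonneg g)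
  have T1 : Tendsto (fun n => ∫ v, (g * g) (fn n v) * (1 : ℝ) ∂μ) atTop
      (𝓝 (∫ v, (g * g) (f v) * (1 : ℝ) ∂μ)) :=
    aux_key μ fn hfn f hf H (g * g) (fun _ => (1 : ℝ)) 1 measurable_const (by simp)
  have T2 : Tendsto (fun n => ∫ v, g (fn n v) * g (f v) ∂μ) atTop
      (𝓝 (∫ v, g (f v) * g (f v) ∂μ)) :=
    aux_key μ fn hfn f hf H g (fun v => g (f v)) ‖g‖
      (g.continuous.measurable.comp hf) (fun v => g.norm_coe_le_norm _)
  have expand : ∀ n, ∫ v, (g (fn n v) - g (f v)) ^ 2 ∂μ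
      = ((∫ v, (g * g) (fn n v) * (1 : ℝ) ∂μ) - 2 * ∫ v, g (fn n v) * g (f v) ∂μ)
        + ∫ v, (g * g) (f v) * (1 : ℝ) ∂μ := by
    intro n
    have i1 : Integrable (fun v => (g * g) (fn n v) * (1 : ℝ)) μ := by
      simpa [ContinuousMap.mul_apply, mul_one] using hint (fn n) (fn n) (hfn n) (hfn n)
    have i2 : Integrable (fun v => 2 * (g (fn n v) * g (f v))) μ :=
      (hint (fn n) f (hfn n) hf).const_mul 2
    have i3 : Integrable (fun v => (g * g) (f v) * (1 : ℝ)) μ := by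
      simpa [ContinuousMap.mul_apply, mul_one] using hint f f hf hf
    have hptw : (fun v => (g (fn n v) - g (f v)) ^ 2)
        = fun v => ((g * g) (fn n v) * (1 : ℝ) - 2 * (g (fn n v) * g (f v)))
          + (g * g) (f v) * (1 : ℝ) := by
      funext v; simp only [ContinuousMap.mul_apply, mul_one]; ring
    have i12 : Integrable
        (fun v => (g * g) (fn n v) * (1 : ℝ) - 2 * (g (fn n v) * g (f v))) μ := i1.sub i2
    rw [hptw, integral_add i12 i3, integral_sub i1 i2, integral_const_mul]
  have hlim := (T1.sub (T2.const_mul 2)).add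
    (tendsto_const_nhds (x := ∫ v, (g * g) (f v) * (1 : ℝ) ∂μ))
  have hL : (∫ v, (g * g) (f v) * (1 : ℝ) ∂μ) = ∫ v, g (f v) * g (f v) ∂μ := by
    simp [ContinuousMap.mul_apply]
  rw [funext expand]
  have : ((∫ v, (g * g) (f v) * (1 : ℝ) ∂μ) - 2 * ∫ v, g (f v) * g (f v) ∂μ)
      + ∫ v, (g * g) (f v) * (1 : ℝ) ∂μ = 0 := by rw [hL]; ring
  rwa [this] at hlim

/-- The bump functions used for the covering argument. -/
noncomputable def auxBump {Z : Type*} [MetricSpace Z] (e : ℝ) (i : Z) : C(Z, ℝ) :=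
  ⟨fun z => max 0 (e / 2 - dist z i),
    continuous_const.max (continuous_const.sub (Continuous.dist continuous_id continuous_const))⟩

lemma auxBump_apply {Z : Type*} [MetricSpace Z] (e : ℝ) (i : Z) (z : Z) :
    auxBump e i z = max 0 (e / 2 - dist z i) := rfl

end Aux

/-- Let `V, W, Z` be compact (Hausdorff, second-countable) spaces, `Z` with a
compatible metric, and `{μ w : w ∈ W}` a CSM of strictly positive Borel probability measures on
a continuous map `π : V → W`.  Fix `w : W` and let `f` and the terms of a sequence `fn` lie in
`L(π⁻¹(w), Z) ⊆ 𝓛(V,Z)`.  Then `fn → f` in the topology of `𝓛(V,Z)` if and only if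
`d₁(fn n, f) = ∫_{π⁻¹(w)} dist (fn n v) (f v) dμ_w(v) → 0`. -/
theorem stmt6
    {V W Z : Type*}
    [TopologicalSpace V] [CompactSpace V] [T2Space V] [SecondCountableTopology V]
    [MeasurableSpace V] [BorelSpace V]
    [TopologicalSpace W] [CompactSpace W] [T2Space W] [SecondCountableTopology W]
    [MeasurableSpace W] [BorelSpace W]
    [MetricSpace Z] [CompactSpace Z] [SecondCountableTopology Z]
    [MeasurableSpace Z] [BorelSpace Z]
    (π : V → W) (hπ : Continuous π)
    (μ : W → Measure V)
    (hprob : ∀ w : W, IsProbabilityMeasure (μ w))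
    (hconc : ∀ w : W, μ w ((π ⁻¹' ({w} : Set W))ᶜ) = 0)
    (hpos : ∀ (w : W) (U : Set V), IsOpen U → (U ∩ π ⁻¹' ({w} : Set W)).Nonempty → 0 < μ w U)
    (hcont : ∀ f : C(V, ℂ), Continuous fun w : W => ∫ v, f v ∂(μ w))
    (w : W) (fn : ℕ → V → Z) (hfn : ∀ n, Measurable (fn n))
    (f : V → Z) (hf : Measurable f) :
    Filter.Tendsto
        (fun n : ℕ => (Quotient.mk (lSetoid V W Z μ) ⟨w, fn n, hfn n⟩ : LSpace V W Z μ))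
        Filter.atTop
        (@nhds _ (lTop V W Z μ) (Quotient.mk (lSetoid V W Z μ) ⟨w, f, hf⟩)) ↔
      Filter.Tendsto (fun n : ℕ => ∫ v, dist (fn n v) (f v) ∂(μ w)) Filter.atTop (nhds 0) := by
  classical
  open Filter Topology in
  haveI := hprob w
  -- Step A: reduce the topological convergence to convergence of all test integrals.
  have hA : Filter.Tendsto
        (fun n : ℕ => (Quotient.mk (lSetoid V W Z μ) ⟨w, fn n, hfn n⟩ : LSpace V W Z μ))
        Filter.atTop
        (@nhds _ (lTop V W Z μ) (Quotient.mk (lSetoid V W Z μ) ⟨w, f, hf⟩)) ↔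
      ∀ (F₁ : C(Z, ℂ)) (F₂ : C(V, ℂ)),
        Tendsto (fun n => ∫ v, F₁ (fn n v) * F₂ v ∂(μ w)) atTop
          (𝓝 (∫ v, F₁ (f v) * F₂ v ∂(μ w))) := by
    set x : LSpace V W Z μ := Quotient.mk (lSetoid V W Z μ) ⟨w, f, hf⟩ with hx
    set s : ℕ → LSpace V W Z μ := fun n => Quotient.mk (lSetoid V W Z μ) ⟨w, fn n, hfn n⟩ with hs
    change Filter.Tendsto s Filter.atTop (@nhds (LSpace V W Z μ) (lTop V W Z μ) x) ↔ _
    unfold lTop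
    simp only [lTop, _root_.nhds_iInf, nhds_induced, Filter.tendsto_iInf, Filter.tendsto_comap_iff]
    exact ⟨fun h F₁ F₂ => h F₁ F₂, fun h F₁ F₂ => h F₁ F₂⟩
  rw [hA]
  -- the diameter bound
  set D := Metric.diam (Set.univ : Set Z) with hDdef
  have hD : ∀ a b : Z, dist a b ≤ D := fun a b =>
    Metric.dist_le_diam_of_mem isCompact_univ.isBounded trivial trivial
  have hD0 : 0 ≤ D := Metric.diam_nonneg
  have intdist : ∀ n, Integrable (fun v => dist (fn n v) (f v)) (μ w) := fun n =>
    aux_integrable_of_bdd ((hfn n).dist hf).aestronglyMeasurable (C := D) fun v => by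
      rw [Real.norm_eq_abs, abs_of_nonneg dist_nonneg]; exact hD _ _
  constructor
  · -- test convergence ⟹ L¹ convergence of dist
    intro H
    rw [NormedAddCommGroup.tendsto_nhds_zero]
    intro ε hε
    set ε₀ : ℝ := ε / 2 with hε₀def
    have hε₀ : 0 < ε₀ := by positivity
    obtain ⟨t, ht⟩ := IsCompact.elim_finite_subcover
      (isCompact_univ : IsCompact (Set.univ : Set Z)) (fun z => Metric.ball z (ε₀ / 4))
      (fun z => Metric.isOpen_ball)
      (fun x _ => Set.mem_iUnion.2 ⟨x, Metric.mem_ball_self (by positivity)⟩)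
    set K : ℝ := 16 * (D + 1) / ε₀ ^ 2 with hKdef
    have hK : 0 < K := by positivity
    -- the pointwise inequality
    have hpt : ∀ a b : Z, dist a b
        ≤ ε₀ + K * ∑ i ∈ t, (auxBump ε₀ i a - auxBump ε₀ i b) ^ 2 := by
      intro a b
      have hsum0 : (0:ℝ) ≤ ∑ i ∈ t, (auxBump ε₀ i a - auxBump ε₀ i b) ^ 2 :=
        Finset.sum_nonneg fun i _ => sq_nonneg _
      by_cases hab : dist a b ≤ ε₀
      · nlinarith [mul_nonneg hK.le hsum0]
      · push_neg at hab
        obtain ⟨i, hit, hai⟩ : ∃ i ∈ t, a ∈ Metric.ball i (ε₀ / 4) := by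
          have := ht (Set.mem_univ a)
          simpa using this
        rw [Metric.mem_ball] at hai
        have h1 : ε₀ / 4 ≤ auxBump ε₀ i a := by
          rw [auxBump_apply]
          calc ε₀ / 4 ≤ ε₀ / 2 - dist a i := by linarith
            _ ≤ max 0 (ε₀ / 2 - dist a i) := le_max_right _ _
        have h2 : auxBump ε₀ i b = 0 := by
          have h3 : dist a b ≤ dist a i + dist b i := by
            rw [dist_comm b i]; exact dist_triangle a i b
          rw [auxBump_apply]
          apply max_eq_left
          linarith
        have h4 : ε₀ ^ 2 / 16 ≤ (auxBump ε₀ i a - auxBump ε₀ i b) ^ 2 := by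
          rw [h2]; nlinarith
        have h5 : ε₀ ^ 2 / 16 ≤ ∑ i ∈ t, (auxBump ε₀ i a - auxBump ε₀ i b) ^ 2 :=
          h4.trans (Finset.single_le_sum
            (f := fun j => (auxBump ε₀ j a - auxBump ε₀ j b) ^ 2)
            (fun j _ => sq_nonneg _) hit)
        have h6 : D + 1 ≤ K * ∑ i ∈ t, (auxBump ε₀ i a - auxBump ε₀ i b) ^ 2 := by
          have h7 : D + 1 = K * (ε₀ ^ 2 / 16) := by
            rw [hKdef]; field_simp
          rw [h7]
          exact mul_le_mul_of_nonneg_left h5 hK.le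
        linarith [hD a b]
    -- integrability of the squares
    have intsq : ∀ (i : Z) (n : ℕ),
        Integrable (fun v => (auxBump ε₀ i (fn n v) - auxBump ε₀ i (f v)) ^ 2) (μ w) := by
      intro i n
      refine aux_integrable_of_bdd
        ((((auxBump ε₀ i).continuous.measurable.comp (hfn n)).sub
          ((auxBump ε₀ i).continuous.measurable.comp hf)).pow_const 2).aestronglyMeasurable
        (C := (2 * ‖auxBump ε₀ i‖) ^ 2) fun v => ?_
      rw [Real.norm_eq_abs, abs_of_nonneg (sq_nonneg _)]
      have ha := (auxBump ε₀ i).norm_coe_le_norm (fn n v)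
      have hb := (auxBump ε₀ i).norm_coe_le_norm (f v)
      rw [Real.norm_eq_abs] at ha hb
      have ha' := abs_le.mp ha
      have hb' := abs_le.mp hb
      nlinarith [ha'.1, ha'.2, hb'.1, hb'.2]
    -- the finite sum of L² norms tends to 0
    have hS : Tendsto
        (fun n => ∑ i ∈ t, ∫ v, (auxBump ε₀ i (fn n v) - auxBump ε₀ i (f v)) ^ 2 ∂(μ w))
        atTop (𝓝 0) := by
      have := tendsto_finset_sum t
        (fun i _ => aux_key2 (μ w) fn hfn f hf H (auxBump ε₀ i))
      simpa using this
    have hev : ∀ᶠ n in atTop, K *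
        (∑ i ∈ t, ∫ v, (auxBump ε₀ i (fn n v) - auxBump ε₀ i (f v)) ^ 2 ∂(μ w)) < ε₀ := by
      refine Filter.Tendsto.eventually_lt_const hε₀ ?_
      simpa using hS.const_mul K
    filter_upwards [hev] with n hn
    have hmono : (∫ v, dist (fn n v) (f v) ∂(μ w))
        ≤ ∫ v, (ε₀ + K * ∑ i ∈ t, (auxBump ε₀ i (fn n v) - auxBump ε₀ i (f v)) ^ 2) ∂(μ w) := by
      refine integral_mono (intdist n) ?_ fun v => hpt _ _
      exact (integrable_const ε₀).add
        ((integrable_finset_sum t (fun i _ => intsq i n)).const_mul K)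
    have hval : (∫ v, (ε₀ + K * ∑ i ∈ t, (auxBump ε₀ i (fn n v) - auxBump ε₀ i (f v)) ^ 2) ∂(μ w))
        = ε₀ + K * ∑ i ∈ t, ∫ v, (auxBump ε₀ i (fn n v) - auxBump ε₀ i (f v)) ^ 2 ∂(μ w) := by
      rw [integral_add (integrable_const ε₀)
        ((integrable_finset_sum t (fun i _ => intsq i n)).const_mul K),
        integral_const, integral_const_mul,
        integral_finset_sum t (fun i _ => intsq i n)]
      simp [measure_univ]
    rw [Real.norm_eq_abs, abs_of_nonneg (integral_nonneg fun v => dist_nonneg)]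
    rw [hval] at hmono
    linarith
  · -- L¹ convergence of dist ⟹ test convergence
    intro hL F₁ F₂
    have hu : UniformContinuous F₁ := CompactSpace.uniformContinuous_of_continuous F₁.continuous
    rw [Metric.uniformContinuous_iff] at hu
    set M₁ : ℝ := ‖F₁‖ with hM₁def
    set M₂ : ℝ := ‖F₂‖ with hM₂def
    have hM₁0 : 0 ≤ M₁ := norm_nonneg _
    have hM₂0 : 0 ≤ M₂ := norm_nonneg _
    rw [Metric.tendsto_atTop]
    intro ε hε
    obtain ⟨δ, hδ, hδ'⟩ := hu (ε / (2 * (M₂ + 1))) (by positivity)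
    set c : ℝ := (2 * M₁ / δ) * M₂ with hcdef
    have hc0 : 0 ≤ c := by positivity
    have hev : ∀ᶠ n in atTop, c * (∫ v, dist (fn n v) (f v) ∂(μ w)) < ε / 4 := by
      refine Filter.Tendsto.eventually_lt_const (by positivity) ?_
      simpa using hL.const_mul c
    obtain ⟨N, hN⟩ := (Filter.eventually_atTop.mp hev)
    refine ⟨N, fun n hn => ?_⟩
    have hintn : Integrable (fun v => F₁ (fn n v) * F₂ v) (μ w) :=
      aux_integrable_of_bdd
        (((F₁.continuous.measurable.comp (hfn n)).mul F₂.continuous.measurable)).aestronglyMeasurable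
        (C := M₁ * M₂) fun v => by
          rw [norm_mul]
          exact mul_le_mul (F₁.norm_coe_le_norm _) (F₂.norm_coe_le_norm _)
            (norm_nonneg _) hM₁0
    have hintf : Integrable (fun v => F₁ (f v) * F₂ v) (μ w) :=
      aux_integrable_of_bdd
        (((F₁.continuous.measurable.comp hf).mul F₂.continuous.measurable)).aestronglyMeasurable
        (C := M₁ * M₂) fun v => by
          rw [norm_mul]
          exact mul_le_mul (F₁.norm_coe_le_norm _) (F₂.norm_coe_le_norm _)
            (norm_nonneg _) hM₁0
    -- pointwise bound
    have hptw : ∀ v, ‖F₁ (fn n v) * F₂ v - F₁ (f v) * F₂ v‖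
        ≤ (ε / (2 * (M₂ + 1))) * M₂ + c * dist (fn n v) (f v) := by
      intro v
      rw [← sub_mul, norm_mul]
      by_cases hv : dist (fn n v) (f v) < δ
      · have h1 : ‖F₁ (fn n v) - F₁ (f v)‖ ≤ ε / (2 * (M₂ + 1)) := by
          rw [← dist_eq_norm]
          exact (hδ' hv).le
        have h2 : ‖F₁ (fn n v) - F₁ (f v)‖ * ‖F₂ v‖ ≤ (ε / (2 * (M₂ + 1))) * M₂ :=
          mul_le_mul h1 (F₂.norm_coe_le_norm v) (norm_nonneg _) (by positivity)
        have h3 : 0 ≤ c * dist (fn n v) (f v) := mul_nonneg hc0 dist_nonneg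
        linarith
      · push_neg at hv
        have h1 : ‖F₁ (fn n v) - F₁ (f v)‖ ≤ (2 * M₁ / δ) * dist (fn n v) (f v) := by
          have h4 : ‖F₁ (fn n v) - F₁ (f v)‖ ≤ 2 * M₁ := by
            calc ‖F₁ (fn n v) - F₁ (f v)‖ ≤ ‖F₁ (fn n v)‖ + ‖F₁ (f v)‖ := norm_sub_le _ _
              _ ≤ 2 * M₁ := by
                  have := F₁.norm_coe_le_norm (fn n v)
                  have := F₁.norm_coe_le_norm (f v)
                  rw [← hM₁def] at *
                  linarith
          calc ‖F₁ (fn n v) - F₁ (f v)‖ ≤ 2 * M₁ := h4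
            _ = (2 * M₁ / δ) * δ := by field_simp
            _ ≤ (2 * M₁ / δ) * dist (fn n v) (f v) :=
                mul_le_mul_of_nonneg_left hv (by positivity)
        have h2 : ‖F₁ (fn n v) - F₁ (f v)‖ * ‖F₂ v‖
            ≤ ((2 * M₁ / δ) * dist (fn n v) (f v)) * M₂ :=
          mul_le_mul h1 (F₂.norm_coe_le_norm v) (norm_nonneg _)
            (by positivity)
        have h5 : 0 ≤ (ε / (2 * (M₂ + 1))) * M₂ := by positivity
        have h6 : ((2 * M₁ / δ) * dist (fn n v) (f v)) * M₂ = c * dist (fn n v) (f v) := by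
          rw [hcdef]; ring
        linarith
    -- integrate the pointwise bound
    have hbound : dist (∫ v, F₁ (fn n v) * F₂ v ∂(μ w)) (∫ v, F₁ (f v) * F₂ v ∂(μ w))
        ≤ (ε / (2 * (M₂ + 1))) * M₂ + c * (∫ v, dist (fn n v) (f v) ∂(μ w)) := by
      rw [dist_eq_norm, ← integral_sub hintn hintf]
      calc ‖∫ v, (F₁ (fn n v) * F₂ v - F₁ (f v) * F₂ v) ∂(μ w)‖
          ≤ ∫ v, ‖F₁ (fn n v) * F₂ v - F₁ (f v) * F₂ v‖ ∂(μ w) :=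
            norm_integral_le_integral_norm _
        _ ≤ ∫ v, ((ε / (2 * (M₂ + 1))) * M₂ + c * dist (fn n v) (f v)) ∂(μ w) := by
            refine integral_mono (hintn.sub hintf).norm ?_ hptw
            exact (integrable_const _).add ((intdist n).const_mul c)
        _ = (ε / (2 * (M₂ + 1))) * M₂ + c * (∫ v, dist (fn n v) (f v) ∂(μ w)) := by
            rw [integral_add (integrable_const _) ((intdist n).const_mul c),
              integral_const, integral_const_mul]
            simp [measure_univ]
    have hsmall : (ε / (2 * (M₂ + 1))) * M₂ ≤ ε / 2 := by
      rw [div_mul_eq_mul_div, div_le_div_iff₀ (by positivity) (by norm_num)]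
      nlinarith
    have := hN n hn
    calc dist (∫ v, F₁ (fn n v) * F₂ v ∂(μ w)) (∫ v, F₁ (f v) * F₂ v ∂(μ w))
        ≤ (ε / (2 * (M₂ + 1))) * M₂ + c * (∫ v, dist (fn n v) (f v) ∂(μ w)) := hbound
      _ < ε / 2 + ε / 4 := by linarith
      _ < ε := by linarith
end

section
/- Let V, W, Z be compact spaces and let {μ_w : w ∈ W} be a CSM of strictly positive Borel probability measures on a continuous map π : V → W. Let (f_n) be a sequence in 𝓛(V,Z) converging to f ∈ 𝓛(V,Z), where f_n ∈ L(π⁻¹(w_n), Z) and f ∈ L(π⁻¹(w), Z), and suppose that for each n there exists z_n ∈ Z with f_n(v) = z_n for μ_{w_n}-almost every v ∈ π⁻¹(w_n). Then there exists z ∈ Z with f(v) = z for μ_w-almost every v ∈ π⁻¹(w). -/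
open MeasureTheory

/-- Let `V, W, Z` be compact (Hausdorff, second-countable) spaces and
`{μ w : w ∈ W}` a CSM of strictly positive Borel probability measures on a continuous map
`π : V → W`.  Let `fn n ∈ L(π⁻¹(wn n), Z)` be a sequence converging in `𝓛(V,Z)` to
`f ∈ L(π⁻¹(w₀), Z)`, and suppose each `fn n` is `μ_{wn n}`-almost everywhere constant.
Then `f` is `μ_{w₀}`-almost everywhere constant. -/
theorem stmt7
    {V W Z : Type*}
    [TopologicalSpace V] [CompactSpace V] [T2Space V] [SecondCountableTopology V]
    [MeasurableSpace V] [BorelSpace V]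
    [TopologicalSpace W] [CompactSpace W] [T2Space W] [SecondCountableTopology W]
    [MeasurableSpace W] [BorelSpace W]
    [TopologicalSpace Z] [CompactSpace Z] [T2Space Z] [SecondCountableTopology Z]
    [MeasurableSpace Z] [BorelSpace Z]
    (π : V → W) (hπ : Continuous π)
    (μ : W → Measure V)
    (hprob : ∀ w : W, IsProbabilityMeasure (μ w))
    (hconc : ∀ w : W, μ w ((π ⁻¹' ({w} : Set W))ᶜ) = 0)
    (hpos : ∀ (w : W) (U : Set V), IsOpen U → (U ∩ π ⁻¹' ({w} : Set W)).Nonempty → 0 < μ w U)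
    (hcont : ∀ f : C(V, ℂ), Continuous fun w : W => ∫ v, f v ∂(μ w))
    (wn : ℕ → W) (fn : ℕ → V → Z) (hfn : ∀ n, Measurable (fn n))
    (hconst : ∀ n : ℕ, ∃ z : Z, fn n =ᵐ[μ (wn n)] fun _ => z)
    (w₀ : W) (f : V → Z) (hf : Measurable f)
    (hconv : Filter.Tendsto
      (fun n : ℕ => (Quotient.mk (lSetoid V W Z μ) ⟨wn n, fn n, hfn n⟩ : LSpace V W Z μ))
      Filter.atTop
      (@nhds _ (lTop V W Z μ) (Quotient.mk (lSetoid V W Z μ) ⟨w₀, f, hf⟩))) :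
    ∃ z : Z, f =ᵐ[μ w₀] fun _ => z := by
  classical
  letI : MetricSpace Z := TopologicalSpace.metrizableSpaceMetric Z
  choose zn hzn using hconst
  obtain ⟨z, -, ψ, hψ, hzconv⟩ := isCompact_univ.tendsto_subseq (x := zn) (fun n => trivial)
  set F₁ : C(Z, ℂ) := ⟨fun y => (dist y z : ℂ),
    Complex.continuous_ofReal.comp (continuous_id.dist continuous_const)⟩ with hF₁
  set F₂ : C(V, ℂ) := ContinuousMap.const V 1 with hF₂
  have hcφ : @Continuous _ _ (lTop V W Z μ) _ (lPhi V W Z μ F₁ F₂) := by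
    unfold lTop
    exact continuous_iInf_dom (continuous_iInf_dom continuous_induced_dom)
  have h1 : Filter.Tendsto
      (fun n => lPhi V W Z μ F₁ F₂ (Quotient.mk (lSetoid V W Z μ) ⟨wn n, fn n, hfn n⟩))
      Filter.atTop (nhds (lPhi V W Z μ F₁ F₂ (Quotient.mk (lSetoid V W Z μ) ⟨w₀, f, hf⟩))) :=
    Filter.Tendsto.comp (@Continuous.tendsto _ _ (lTop V W Z μ) _ _ hcφ _) hconv
  have hval : ∀ n, lPhi V W Z μ F₁ F₂ (Quotient.mk (lSetoid V W Z μ) ⟨wn n, fn n, hfn n⟩)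
      = F₁ (zn n) := by
    intro n
    show (∫ v, F₁ (fn n v) * F₂ v ∂(μ (wn n))) = F₁ (zn n)
    have he : (fun v => F₁ (fn n v) * F₂ v) =ᵐ[μ (wn n)] fun _ => F₁ (zn n) := by
      refine (hzn n).mono fun v hv => ?_
      simp only [hF₂, ContinuousMap.const_apply, mul_one]
      rw [show fn n v = zn n from hv]
    rw [integral_congr_ae he, integral_const, Measure.real, (hprob (wn n)).measure_univ]
    simp
  have h2 : Filter.Tendsto (fun k => F₁ (zn (ψ k))) Filter.atTop
      (nhds (lPhi V W Z μ F₁ F₂ (Quotient.mk (lSetoid V W Z μ) ⟨w₀, f, hf⟩))) := by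
    have := h1.comp hψ.tendsto_atTop
    simpa only [Function.comp_def, hval] using this
  have h3 : Filter.Tendsto (fun k => F₁ (zn (ψ k))) Filter.atTop (nhds (F₁ z)) :=
    (F₁.continuous.tendsto z).comp hzconv
  have hL : lPhi V W Z μ F₁ F₂ (Quotient.mk (lSetoid V W Z μ) ⟨w₀, f, hf⟩) = F₁ z :=
    tendsto_nhds_unique h2 h3
  have hLval : (∫ v, F₁ (f v) * F₂ v ∂(μ w₀)) = F₁ z := hL
  have hF₁z : F₁ z = 0 := by simp [hF₁]
  have hre : (∫ v, ((dist (f v) z : ℝ) : ℂ) ∂(μ w₀)) = 0 := by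
    have : (fun v => F₁ (f v) * F₂ v) = fun v => ((dist (f v) z : ℝ) : ℂ) := by
      funext v; simp [hF₁, hF₂]
    rw [← this, hLval, hF₁z]
  have hmeas : Measurable fun v => dist (f v) z :=
    (continuous_id.dist continuous_const).measurable.comp hf
  have hint : Integrable (fun v => dist (f v) z) (μ w₀) := by
    refine ⟨hmeas.aestronglyMeasurable, ?_⟩
    apply HasFiniteIntegral.of_bounded (C := Metric.diam (Set.univ : Set Z))
    refine Filter.Eventually.of_forall fun v => ?_
    rw [Real.norm_eq_abs, abs_of_nonneg dist_nonneg]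
    exact Metric.dist_le_diam_of_mem isCompact_univ.isBounded trivial trivial
  have h0 : Complex.ofRealCLM (∫ v, dist (f v) z ∂(μ w₀)) = 0 := by
    rw [← ContinuousLinearMap.integral_comp_comm _ hint]
    simpa using hre
  have hre' : (∫ v, dist (f v) z ∂(μ w₀)) = 0 := by
    simpa using Complex.ofReal_eq_zero.mp h0
  have hae := (integral_eq_zero_iff_of_nonneg (fun v => dist_nonneg) hint).mp hre'
  refine ⟨z, hae.mono fun v hv => ?_⟩
  exact dist_eq_zero.mp hv
end

section
/- Let V, W be compact spaces and let {μ_w : w ∈ W} be a CSM of Borel probability measures on a continuous map π : V → W. Let V×_W V = {(v₀,v₁) ∈ V×V : π(v₀) = π(v₁)}, a compact subset of V×V, and let π' : V×_W V → W be given by π'(v₀,v₁) = π(v₀). Then the family of product measures {μ_w × μ_w : w ∈ W}, each regarded as a Borel measure on V×_W V concentrated on π'⁻¹(w) = π⁻¹(w) × π⁻¹(w), is a continuous system of measures on π'; in particular, for every continuous f : V×_W V → ℂ the map w ↦ ∫_{π'⁻¹(w)} f d(μ_w × μ_w) is continuous. -/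
open MeasureTheory

lemma cont_integral_prod
    {V W : Type*} [TopologicalSpace V] [CompactSpace V] [T2Space V] [SecondCountableTopology V]
    [MeasurableSpace V] [BorelSpace V] [TopologicalSpace W]
    (μ : W → Measure V) (hprob : ∀ w, IsProbabilityMeasure (μ w))
    (hcont : ∀ f : C(V, ℂ), Continuous fun w => ∫ v, f v ∂(μ w))
    (g : C(V × V, ℂ)) :
    Continuous fun w => ∫ p, g p ∂((μ w).prod (μ w)) := by
  haveI := hprob
  classical
  letI : MetricSpace V := TopologicalSpace.metrizableSpaceMetric V
  set T : Set C(V × V, ℂ) :=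
    {h | ∃ φ ψ : C(V, ℂ), h = (φ.comp ContinuousMap.fst) * (ψ.comp ContinuousMap.snd)} with hT
  have hT1 : (1 : C(V × V, ℂ)) ∈ T := ⟨1, 1, by ext p; simp⟩
  have hTmul : ∀ a ∈ T, ∀ b ∈ T, a * b ∈ T := by
    rintro _ ⟨φ, ψ, rfl⟩ _ ⟨φ', ψ', rfl⟩
    exact ⟨φ * φ', ψ * ψ', by ext p; simp; ring⟩
  set M : Submodule ℂ C(V × V, ℂ) := Submodule.span ℂ T with hM
  have hMmul : ∀ x y : C(V × V, ℂ), x ∈ M → y ∈ M → x * y ∈ M := by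
    intro a b ha hb
    have h1 : a * b ∈ M * M := Submodule.mul_mem_mul ha hb
    rw [hM, Submodule.span_mul_span] at h1
    refine Submodule.span_le.mpr ?_ h1
    rintro _ ⟨x, hx, y, hy, rfl⟩
    exact Submodule.subset_span (hTmul x hx y hy)
  have hMstar : ∀ a ∈ M, star a ∈ M := by
    intro a ha
    induction ha using Submodule.span_induction with
    | mem x hx =>
      obtain ⟨φ, ψ, rfl⟩ := hx
      refine Submodule.subset_span ⟨star φ, star ψ, ?_⟩
      ext p; simp
    | zero => simp
    | add x y hx hy ihx ihy => simpa [star_add] using Submodule.add_mem M ihx ihy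
    | smul c x hx ih => simpa [star_smul] using Submodule.smul_mem M (starRingEnd ℂ c) ih
  set A : StarSubalgebra ℂ C(V × V, ℂ) :=
    { toSubalgebra := M.toSubalgebra (Submodule.subset_span hT1) hMmul
      star_mem' := fun {a} ha => hMstar a ha } with hA
  -- A separates points
  have hsep : A.SeparatesPoints := by
    intro x y hxy
    have : x.1 ≠ y.1 ∨ x.2 ≠ y.2 := by
      by_contra h
      push_neg at h
      exact hxy (Prod.ext h.1 h.2)
    rcases this with h | h
    · set φ : C(V, ℂ) := ⟨fun v => (dist v y.1 : ℝ),
        Complex.continuous_ofReal.comp (continuous_id.dist continuous_const)⟩ with hφ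
      set e : C(V × V, ℂ) := (φ.comp ContinuousMap.fst) * ((1 : C(V, ℂ)).comp ContinuousMap.snd)
        with he
      refine ⟨e, ⟨e, Submodule.subset_span ⟨φ, 1, rfl⟩, rfl⟩, ?_⟩
      simp only [he, hφ, ContinuousMap.mul_apply, ContinuousMap.comp_apply,
        ContinuousMap.coe_mk, ContinuousMap.one_apply, mul_one, ContinuousMap.fst_apply]
      intro hc
      rw [Complex.ofReal_inj] at hc
      simp only [dist_self] at hc
      exact h (dist_eq_zero.mp hc)
    · set φ : C(V, ℂ) := ⟨fun v => (dist v y.2 : ℝ),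
        Complex.continuous_ofReal.comp (continuous_id.dist continuous_const)⟩ with hφ
      set e : C(V × V, ℂ) := ((1 : C(V, ℂ)).comp ContinuousMap.fst) * (φ.comp ContinuousMap.snd)
        with he
      refine ⟨e, ⟨e, Submodule.subset_span ⟨1, φ, rfl⟩, rfl⟩, ?_⟩
      simp only [he, hφ, ContinuousMap.mul_apply, ContinuousMap.comp_apply,
        ContinuousMap.coe_mk, ContinuousMap.one_apply, one_mul, ContinuousMap.snd_apply]
      intro hc
      rw [Complex.ofReal_inj] at hc
      simp only [dist_self] at hc
      exact h (dist_eq_zero.mp hc)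
  have hdense : A.topologicalClosure = ⊤ :=
    ContinuousMap.starSubalgebra_topologicalClosure_eq_top_of_separatesPoints A hsep
  -- every element of M has continuous integral map
  have hspan : ∀ h : C(V × V, ℂ), h ∈ M →
      Continuous fun w => ∫ p, h p ∂((μ w).prod (μ w)) := by
    intro h hh
    induction hh using Submodule.span_induction with
    | mem x hx =>
      obtain ⟨φ, ψ, rfl⟩ := hx
      have : (fun w => ∫ p, (((φ.comp ContinuousMap.fst) * (ψ.comp ContinuousMap.snd) : C(V × V, ℂ))) p
          ∂((μ w).prod (μ w)))
          = fun w => (∫ v, φ v ∂(μ w)) * (∫ v, ψ v ∂(μ w)) := by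
        funext w
        have := integral_prod_mul (μ := μ w) (ν := μ w) (f := fun v => φ v)
          (g := fun v => ψ v)
        simpa using this
      rw [this]
      exact (hcont φ).mul (hcont ψ)
    | zero => simpa using continuous_const
    | add x y hx hy ihx ihy =>
      have : (fun w => ∫ p, (x + y) p ∂((μ w).prod (μ w)))
          = fun w => (∫ p, x p ∂((μ w).prod (μ w))) + (∫ p, y p ∂((μ w).prod (μ w))) := by
        funext w
        simp only [ContinuousMap.add_apply]
        exact integral_add
          (x.continuous.integrable_of_hasCompactSupport (HasCompactSupport.of_compactSpace _))
          (y.continuous.integrable_of_hasCompactSupport (HasCompactSupport.of_compactSpace _))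
      rw [this]; exact ihx.add ihy
    | smul c x hx ih =>
      have : (fun w => ∫ p, (c • x) p ∂((μ w).prod (μ w)))
          = fun w => c • ∫ p, x p ∂((μ w).prod (μ w)) := by
        funext w
        simp only [ContinuousMap.smul_apply]
        exact integral_smul c _
      rw [this]; exact ih.const_smul c
  -- g is in the closure of M
  have hgmem : g ∈ closure (M : Set C(V × V, ℂ)) := by
    have : g ∈ A.topologicalClosure := hdense ▸ trivial
    exact this
  obtain ⟨u, hu, hulim⟩ := mem_closure_iff_seq_limit.mp hgmem
  have key : TendstoUniformly (fun n w => ∫ p, (u n) p ∂((μ w).prod (μ w)))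
      (fun w => ∫ p, g p ∂((μ w).prod (μ w))) Filter.atTop := by
    rw [Metric.tendstoUniformly_iff]
    intro ε hε
    have : ∀ᶠ n in Filter.atTop, dist (u n) g < ε :=
      (Metric.tendsto_nhds.mp hulim) ε hε
    filter_upwards [this] with n hn w
    have hint1 : Integrable (fun p => g p) ((μ w).prod (μ w)) :=
      g.continuous.integrable_of_hasCompactSupport (HasCompactSupport.of_compactSpace _)
    have hint2 : Integrable (fun p => (u n) p) ((μ w).prod (μ w)) :=
      (u n).continuous.integrable_of_hasCompactSupport (HasCompactSupport.of_compactSpace _)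
    have hsub : (∫ p, g p ∂((μ w).prod (μ w))) - (∫ p, (u n) p ∂((μ w).prod (μ w)))
        = ∫ p, (g p - (u n) p) ∂((μ w).prod (μ w)) := (integral_sub hint1 hint2).symm
    have hbound : ‖∫ p, (g p - (u n) p) ∂((μ w).prod (μ w))‖ ≤ dist g (u n) := by
      have := norm_integral_le_of_norm_le_const (μ := (μ w).prod (μ w))
        (f := fun p => g p - (u n) p) (C := dist g (u n))
        (Filter.Eventually.of_forall fun p => by
          rw [← dist_eq_norm]
          exact ContinuousMap.dist_apply_le_dist p)
      simpa using this
    calc dist (∫ p, g p ∂((μ w).prod (μ w))) (∫ p, (u n) p ∂((μ w).prod (μ w)))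
        = ‖∫ p, (g p - (u n) p) ∂((μ w).prod (μ w))‖ := by rw [dist_eq_norm, hsub]
      _ ≤ dist g (u n) := hbound
      _ < ε := by rwa [dist_comm]
  exact key.continuous (Filter.Eventually.of_forall fun n => hspan _ (hu n)).frequently

/-- Let `V, W` be compact (Hausdorff, second-countable) spaces and let
`{μ w : w ∈ W}` be a CSM of Borel probability measures on a continuous map `π : V → W`.
Let `V ×_W V = {(v₀,v₁) : π v₀ = π v₁}` (a compact subspace of `V × V`) with projection
`π' (v₀,v₁) = π v₀`.  Then the family of product measures `μ w × μ w`, regarded (via `comap` of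
the inclusion) as Borel measures on `V ×_W V` concentrated on `π'⁻¹(w) = π⁻¹(w) × π⁻¹(w)`, is a
continuous system of measures on `π'`: each is concentrated on the corresponding fibre, and for
every continuous `f : V ×_W V → ℂ` the map `w ↦ ∫ f d(μ_w × μ_w)` is continuous. -/
theorem stmt9
    {V W : Type*}
    [TopologicalSpace V] [CompactSpace V] [T2Space V] [SecondCountableTopology V]
    [MeasurableSpace V] [BorelSpace V]
    [TopologicalSpace W] [CompactSpace W] [T2Space W] [SecondCountableTopology W]
    [MeasurableSpace W] [BorelSpace W]
    (π : V → W) (hπ : Continuous π)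
    (μ : W → Measure V)
    (hprob : ∀ w : W, IsProbabilityMeasure (μ w))
    (hconc : ∀ w : W, μ w ((π ⁻¹' ({w} : Set W))ᶜ) = 0)
    (hcont : ∀ f : C(V, ℂ), Continuous fun w : W => ∫ v, f v ∂(μ w)) :
    CompactSpace {p : V × V // π p.1 = π p.2} ∧
    (∀ w : W,
      Measure.comap (Subtype.val : {p : V × V // π p.1 = π p.2} → V × V)
          ((μ w).prod (μ w))
        (((fun p : {p : V × V // π p.1 = π p.2} => π p.val.1) ⁻¹' ({w} : Set W))ᶜ) = 0) ∧
    (∀ f : C({p : V × V // π p.1 = π p.2}, ℂ),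
      Continuous fun w : W =>
        ∫ p, f p ∂(Measure.comap (Subtype.val : {p : V × V // π p.1 = π p.2} → V × V)
          ((μ w).prod (μ w)))) := by
  have hS : IsClosed {p : V × V | π p.1 = π p.2} :=
    isClosed_eq (hπ.comp continuous_fst) (hπ.comp continuous_snd)
  haveI := hprob
  have hcompact : CompactSpace {p : V × V // π p.1 = π p.2} :=
    isCompact_iff_compactSpace.mp hS.isCompact
  have hemb : MeasurableEmbedding (Subtype.val : {p : V × V // π p.1 = π p.2} → V × V) :=
    MeasurableEmbedding.subtype_coe hS.measurableSet
  -- the product measure gives no mass outside the fibre product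
  have hnull : ∀ w : W, ∀ s : Set (V × V),
      s ⊆ {p : V × V | π p.1 ≠ w} ∪ {p : V × V | π p.2 ≠ w} → ((μ w).prod (μ w)) s = 0 := by
    intro w s hs
    refine measure_mono_null hs (measure_union_null ?_ ?_)
    · have h1 : {p : V × V | π p.1 ≠ w} = (π ⁻¹' ({w} : Set W))ᶜ ×ˢ Set.univ := by
        ext p; simp [Set.mem_prod]
      rw [h1, Measure.prod_prod, hconc w, zero_mul]
    · have h2 : {p : V × V | π p.2 ≠ w} = Set.univ ×ˢ (π ⁻¹' ({w} : Set W))ᶜ := by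
        ext p; simp [Set.mem_prod]
      rw [h2, Measure.prod_prod, hconc w, mul_zero]
  refine ⟨hcompact, ?_, ?_⟩
  · intro w
    rw [hemb.comap_apply]
    apply hnull w
    rintro _ ⟨p, hp, rfl⟩
    exact Or.inl hp
  · intro f
    obtain ⟨g, hg⟩ := (f : C({p : V × V | π p.1 = π p.2}, ℂ)).exists_restrict_eq hS
    have key : ∀ w : W,
        (∫ p, f p ∂(Measure.comap (Subtype.val : {p : V × V // π p.1 = π p.2} → V × V)
          ((μ w).prod (μ w)))) = ∫ x, g x ∂((μ w).prod (μ w)) := by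
      intro w
      have h1 : (fun p : {p : V × V // π p.1 = π p.2} => f p)
          = fun p : {p : V × V // π p.1 = π p.2} => g (p : V × V) := by
        funext p
        rw [← hg]
        rfl
      rw [h1, ← hemb.integral_map, hemb.map_comap, Subtype.range_coe_subtype,
        Measure.restrict_eq_self_of_ae_mem]
      rw [MeasureTheory.ae_iff]
      apply hnull w
      intro p hp
      simp only [Set.mem_setOf_eq] at hp
      by_contra hc
      simp only [Set.mem_union, Set.mem_setOf_eq] at hc
      push_neg at hc
      exact hp (hc.1.trans hc.2.symm)
    simp only [key]
    exact cont_integral_prod μ hprob hcont g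
end
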